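/- arXiv:2310.07381 — 11 statements merged into one kernel-verified Lean document; each statement's English description precedes it below -/
import Mathlib

section
/- Fix an integer N ≥ 1, a full-support prior p on {x_1,…,x_N}, a privacy level ε ≥ 0, and a sublinear function μ : [0,∞)^N → [0,∞). For every integer M ≥ 1 and every N×M privacy mechanism P satisfying ε-PML with respect to p, there exists an N×N privacy mechanism Q satisfying ε-PML with respect to p such that U(Q) ≥ U(P), where U is the sub-convex utility associated with μ. In particular, the supremum of U over ε-PML mechanisms with arbitrary finite output alphabet equals the supremum over mechanisms with output alphabet of size at most N. -/
open scoped BigOperators Classical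

noncomputable section

/-- The output distribution `P_Y(j) = ∑ i, p i * P i j` induced by a prior `p`
and a mechanism `P`. -/
def outDist {N M : ℕ} (p : Fin N → ℝ) (P : Matrix (Fin N) (Fin M) ℝ) (j : Fin M) : ℝ :=
  ∑ i, p i * P i j

/-- A privacy mechanism: nonnegative entries, rows summing to one. -/
def IsMechanism {N M : ℕ} (P : Matrix (Fin N) (Fin M) ℝ) : Prop :=
  (∀ i j, 0 ≤ P i j) ∧ ∀ i, ∑ j, P i j = 1

/-- Pointwise maximal leakage to output `j`:
`ℓ(X → y_j) = log((max_i P i j) / P_Y(j))`. -/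
def pml {N M : ℕ} (p : Fin N → ℝ) (P : Matrix (Fin N) (Fin M) ℝ) (j : Fin M) : ℝ :=
  Real.log ((⨆ i, P i j) / outDist p P j)

/-- `P` satisfies `ε`-PML (w.r.t. prior `p`): the leakage of every output of
positive probability is at most `ε`. -/
def SatisfiesPML {N M : ℕ} (p : Fin N → ℝ) (ε : ℝ) (P : Matrix (Fin N) (Fin M) ℝ) : Prop :=
  ∀ j, 0 < outDist p P j → pml p P j ≤ ε

/-- A sublinear function `μ : [0,∞)^N → [0,∞)`: nonnegative, positively
homogeneous and subadditive on the nonnegative orthant. -/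
def Sublinear {N : ℕ} (μ : (Fin N → ℝ) → ℝ) : Prop :=
  (∀ x, (∀ i, 0 ≤ x i) → 0 ≤ μ x) ∧
  (∀ (c : ℝ), 0 ≤ c → ∀ x, (∀ i, 0 ≤ x i) → μ (c • x) = c * μ x) ∧
  (∀ x y, (∀ i, 0 ≤ x i) → (∀ i, 0 ≤ y i) → μ (x + y) ≤ μ x + μ y)

/-- The sub-convex utility associated with `μ`: `U(P) = ∑ j, μ(P_j)` where
`P_j` is the `j`-th column of `P`. -/
def utility {N M : ℕ} (μ : (Fin N → ℝ) → ℝ) (P : Matrix (Fin N) (Fin M) ℝ) : ℝ :=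
  ∑ j, μ (fun i => P i j)

end

/-!
On a full-support prior, ε-PML is the linear constraint `P i j ≤ exp ε * P_Y(j)`, which is
preserved by rescaling columns with nonnegative factors. If a mechanism has more than `N` nonzero
columns, they are linearly dependent: `P *ᵥ c = 0` with `c ≠ 0` of both signs. Rescaling column
`j` by `1 + t * c j` keeps every row a probability vector, changes the utility by
`t * ∑ j, c j * μ (P_j)` because `μ` is positively homogeneous, and at the first `t` where a factor
vanishes kills a column; choosing the sign of `c` makes this change nonnegative. Deleting zero
columns, or adding them when there are fewer than `N`, changes nothing, which yields an `N × N`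
mechanism. Every value of the utility is thus dominated by one attained with `N` outputs, so the
two suprema agree.
-/

open Matrix Finset

def SatisfiesLinearPML {N M : ℕ} (p : Fin N → ℝ) (ε : ℝ) (P : Matrix (Fin N) (Fin M) ℝ) : Prop :=
  ∀ i j, P i j ≤ Real.exp ε * outDist p P j

def PosHomogeneous {N : ℕ} (μ : (Fin N → ℝ) → ℝ) : Prop :=
  ∀ c : ℝ, 0 ≤ c → ∀ x, (∀ i, 0 ≤ x i) → μ (c • x) = c * μ x

theorem Sublinear.posHomogeneous {N : ℕ} {μ : (Fin N → ℝ) → ℝ} (hμ : Sublinear μ) :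
    PosHomogeneous μ :=
  hμ.2.1

theorem PosHomogeneous.map_zero {N : ℕ} {μ : (Fin N → ℝ) → ℝ} (hμ : PosHomogeneous μ) :
    μ 0 = 0 := by
  simpa using hμ 0 le_rfl 0 fun _ => le_rfl

section Leakage

variable {N M : ℕ} {p : Fin N → ℝ} {ε : ℝ} {P : Matrix (Fin N) (Fin M) ℝ}

theorem outDist_eq_vecMul : outDist p P = p ᵥ* P := rfl

theorem outDist_nonneg (hp : ∀ i, 0 ≤ p i) (hP : ∀ i j, 0 ≤ P i j) (j : Fin M) :
    0 ≤ outDist p P j :=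
  sum_nonneg fun i _ => mul_nonneg (hp i) (hP i j)

theorem eq_zero_of_outDist_eq_zero (hp : ∀ i, 0 < p i) (hP : ∀ i j, 0 ≤ P i j) {j : Fin M}
    (h : outDist p P j = 0) (i : Fin N) : P i j = 0 := by
  have hterm := (sum_eq_zero_iff_of_nonneg fun i _ => mul_nonneg (hp i).le (hP i j)).1 h i
    (mem_univ i)
  exact (mul_eq_zero.1 hterm).resolve_left (hp i).ne'

theorem satisfiesPML_iff_linear (hp : ∀ i, 0 < p i) (hP : ∀ i j, 0 ≤ P i j) :
    SatisfiesPML p ε P ↔ SatisfiesLinearPML p ε P := by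
  have hbdd (j : Fin M) : BddAbove (Set.range fun i => P i j) := (Set.finite_range _).bddAbove
  have hsup_pos (j : Fin M) (hj : 0 < outDist p P j) : 0 < ⨆ i, P i j := by
    obtain ⟨i, hi⟩ : ∃ i, P i j ≠ 0 := by
      by_contra! h
      exact hj.ne' (sum_eq_zero fun i _ => by rw [h i, mul_zero])
    exact (lt_of_le_of_ne (hP i j) hi.symm).trans_le (le_ciSup (hbdd j) i)
  have hpml (j : Fin M) (hj : 0 < outDist p P j) :
      pml p P j ≤ ε ↔ (⨆ i, P i j) ≤ Real.exp ε * outDist p P j := by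
    rw [pml, Real.log_le_iff_le_exp (div_pos (hsup_pos j hj) hj), div_le_iff₀ hj, mul_comm]
  constructor
  · intro h i j
    rcases (outDist_nonneg (fun i => (hp i).le) hP j).eq_or_lt with hj | hj
    · rw [eq_zero_of_outDist_eq_zero hp hP hj.symm i, ← hj, mul_zero]
    · exact (le_ciSup (hbdd j) i).trans ((hpml j hj).1 (h j hj))
  · intro h j hj
    have : Nonempty (Fin N) := by
      by_contra!
      simp [outDist] at hj
    exact (hpml j hj).2 (ciSup_le fun i => h i j)

theorem SatisfiesLinearPML.mul {K : ℕ} (h : SatisfiesLinearPML p ε P)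
    {S : Matrix (Fin M) (Fin K) ℝ} (hS : ∀ j k, 0 ≤ S j k) :
    SatisfiesLinearPML p ε (P * S) := by
  intro i k
  rw [outDist_eq_vecMul, ← vecMul_vecMul, mul_apply, vecMul, dotProduct, mul_sum]
  refine sum_le_sum fun j _ => ?_
  rw [← mul_assoc]
  exact mul_le_mul_of_nonneg_right (h i j) (hS j k)

end Leakage

section Scaling

variable {N M : ℕ} {P : Matrix (Fin N) (Fin M) ℝ} {s : Fin M → ℝ}

theorem IsMechanism.mulVec_one (hP : IsMechanism P) : P *ᵥ 1 = 1 := by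
  ext i
  simpa [mulVec, dotProduct] using hP.2 i

theorem isMechanism_mul_diagonal (hP : ∀ i j, 0 ≤ P i j) (hs : ∀ j, 0 ≤ s j)
    (hrow : P *ᵥ s = 1) : IsMechanism (P * diagonal s) := by
  refine ⟨fun i j => ?_, fun i => ?_⟩
  · rw [mul_diagonal]
    exact mul_nonneg (hP i j) (hs j)
  · simp_rw [mul_diagonal]
    exact congrFun hrow i

theorem utility_mul_diagonal {μ : (Fin N → ℝ) → ℝ} (hμ : PosHomogeneous μ)
    (hP : ∀ i j, 0 ≤ P i j) (hs : ∀ j, 0 ≤ s j) :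
    utility μ (P * diagonal s) = ∑ j, s j * μ (fun i => P i j) := by
  refine sum_congr rfl fun j _ => ?_
  have hcol : (fun i => (P * diagonal s) i j) = s j • fun i => P i j := by
    ext i
    rw [mul_diagonal, Pi.smul_apply, smul_eq_mul, mul_comm]
  rw [hcol, hμ _ (hs j) _ fun i => hP i j]

end Scaling

theorem exists_mulVec_eq_zero_of_card_lt {m n K : Type*} [Fintype m] [Fintype n] [Field K]
    (A : Matrix m n K) (h : Fintype.card m < Fintype.card n) : ∃ c ≠ 0, A *ᵥ c = 0 := by
  obtain ⟨c, hc, hc0⟩ := (Submodule.ne_bot_iff _).1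
    (LinearMap.ker_ne_bot_of_finrank_lt (f := A.mulVecLin) (by simpa using h))
  exact ⟨c, hc0, hc⟩

/-- A nonzero kernel vector of a nonnegative matrix without zero columns must have entries of
both signs, so whichever of `c`, `-c` pairs nonnegatively with `w` has a negative entry. -/
theorem exists_mulVec_eq_zero_of_card_lt_of_nonneg {m n : Type*} [Fintype m] [Fintype n]
    {A : Matrix m n ℝ} (hA : ∀ i j, 0 ≤ A i j) (hcol : ∀ j, ∃ i, A i j ≠ 0)
    (hcard : Fintype.card m < Fintype.card n) (w : n → ℝ) :
    ∃ c, A *ᵥ c = 0 ∧ 0 ≤ ∑ j, c j * w j ∧ ∃ j, c j < 0 := by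
  have hneg (c : n → ℝ) (hc : A *ᵥ c = 0) (hc0 : c ≠ 0) : ∃ j, c j < 0 := by
    by_contra! hnonneg
    obtain ⟨j, hj⟩ := Function.ne_iff.1 hc0
    obtain ⟨i, hi⟩ := hcol j
    have := (sum_eq_zero_iff_of_nonneg fun j _ => mul_nonneg (hA i j) (hnonneg j)).1
      (congrFun hc i) j (mem_univ j)
    exact (mul_ne_zero hi hj) this
  obtain ⟨c, hc0, hc⟩ := exists_mulVec_eq_zero_of_card_lt A hcard
  rcases le_total 0 (∑ j, c j * w j) with hw | hw
  · exact ⟨c, hc, hw, hneg c hc hc0⟩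
  · have hc' : A *ᵥ -c = 0 := by rw [mulVec_neg, hc, neg_zero]
    exact ⟨-c, hc', by simpa using hw, hneg (-c) hc' (neg_ne_zero.2 hc0)⟩

theorem exists_one_add_mul_nonneg_eq_zero {ι : Type*} [Finite ι] {c : ι → ℝ}
    (h : ∃ j, c j < 0) : ∃ t, 0 ≤ t ∧ (∀ j, 0 ≤ 1 + t * c j) ∧ ∃ j, 1 + t * c j = 0 := by
  obtain ⟨j₀, hj₀⟩ := h
  have : Nonempty ι := ⟨j₀⟩
  obtain ⟨j, hmin⟩ := Finite.exists_min c
  have hj : c j < 0 := (hmin j₀).trans_lt hj₀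
  refine ⟨-(c j)⁻¹, by simpa using hj.le, fun k => ?_, j,
    by rw [neg_mul, inv_mul_cancel₀ hj.ne, add_neg_cancel]⟩
  have : c k / c j ≤ 1 := (div_le_one_of_neg hj).2 (hmin k)
  rw [neg_mul, ← div_eq_inv_mul]
  linarith

section Reduction

variable {N M : ℕ} {p : Fin N → ℝ} {ε : ℝ} {μ : (Fin N → ℝ) → ℝ}

theorem exists_zero_col_of_lt (hμ : PosHomogeneous μ) {P : Matrix (Fin N) (Fin M) ℝ}
    (hP : IsMechanism P) (hlin : SatisfiesLinearPML p ε P) (hNM : N < M) :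
    ∃ P' : Matrix (Fin N) (Fin M) ℝ, IsMechanism P' ∧ SatisfiesLinearPML p ε P' ∧
      utility μ P ≤ utility μ P' ∧ ∃ j, ∀ i, P' i j = 0 := by
  by_cases hzero : ∃ j, ∀ i, P i j = 0
  · exact ⟨P, hP, hlin, le_rfl, hzero⟩
  push Not at hzero
  obtain ⟨c, hc, hcμ, hneg⟩ := exists_mulVec_eq_zero_of_card_lt_of_nonneg hP.1 hzero
    (by simpa using hNM) fun j => μ fun i => P i j
  obtain ⟨t, ht, hnonneg, j, hj⟩ := exists_one_add_mul_nonneg_eq_zero hneg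
  set s : Fin M → ℝ := 1 + t • c
  have hs : ∀ k, 0 ≤ s k := hnonneg
  have hrow : P *ᵥ s = 1 := by
    rw [mulVec_add, mulVec_smul, hc, hP.mulVec_one, smul_zero, add_zero]
  refine ⟨P * diagonal s, isMechanism_mul_diagonal hP.1 hs hrow,
    hlin.mul fun k l => ?_, ?_, j, fun i => by rw [mul_diagonal]; exact mul_eq_zero_of_right _ hj⟩
  · rw [diagonal_apply]
    split_ifs
    exacts [hs k, le_rfl]
  · calc utility μ P ≤ utility μ P + t * ∑ j, c j * μ (fun i => P i j) :=
          le_add_of_nonneg_right (mul_nonneg ht hcμ)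
      _ = utility μ (P * diagonal s) := by
          rw [utility_mul_diagonal hμ hP.1 hs, utility, mul_sum, ← sum_add_distrib]
          simp [s, add_mul, mul_assoc]

section ZeroCol

variable {P : Matrix (Fin N) (Fin (M + 1)) ℝ} {j : Fin (M + 1)}

theorem isMechanism_submatrix_succAbove_iff (hj : ∀ i, P i j = 0) :
    IsMechanism (P.submatrix id j.succAbove) ↔ IsMechanism P := by
  simp only [IsMechanism, submatrix_apply, id, Fin.sum_univ_succAbove _ j, hj, zero_add]
  exact and_congr_left' ⟨fun h i => (Fin.forall_iff_succAbove j).2 ⟨(hj i).ge, h i⟩,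
    fun h i k => h i _⟩

theorem satisfiesLinearPML_submatrix_succAbove_iff (hj : ∀ i, P i j = 0) :
    SatisfiesLinearPML p ε (P.submatrix id j.succAbove) ↔ SatisfiesLinearPML p ε P := by
  have hout : outDist p P j = 0 := by simp [outDist, hj]
  refine ⟨fun h i => (Fin.forall_iff_succAbove j).2 ⟨?_, h i⟩, fun h i k => h i _⟩
  rw [hj, hout, mul_zero]

theorem utility_submatrix_succAbove (hμ : PosHomogeneous μ) (hj : ∀ i, P i j = 0) :
    utility μ (P.submatrix id j.succAbove) = utility μ P := by
  have hcol : (fun i => P i j) = 0 := funext hj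
  rw [utility, utility, Fin.sum_univ_succAbove _ j, hcol, hμ.map_zero, zero_add]
  rfl

end ZeroCol

theorem exists_outputs_pred_of_lt (hμ : PosHomogeneous μ) {P : Matrix (Fin N) (Fin (M + 1)) ℝ}
    (hP : IsMechanism P) (hlin : SatisfiesLinearPML p ε P) (hNM : N < M + 1) :
    ∃ Q : Matrix (Fin N) (Fin M) ℝ, IsMechanism Q ∧ SatisfiesLinearPML p ε Q ∧
      utility μ P ≤ utility μ Q := by
  obtain ⟨P', hP', hlin', hle, j, hj⟩ := exists_zero_col_of_lt hμ hP hlin hNM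
  exact ⟨P'.submatrix id j.succAbove, (isMechanism_submatrix_succAbove_iff hj).2 hP',
    (satisfiesLinearPML_submatrix_succAbove_iff hj).2 hlin',
    hle.trans (utility_submatrix_succAbove hμ hj).ge⟩

theorem exists_outputs_succ (hμ : PosHomogeneous μ) {P : Matrix (Fin N) (Fin M) ℝ}
    (hP : IsMechanism P) (hlin : SatisfiesLinearPML p ε P) :
    ∃ Q : Matrix (Fin N) (Fin (M + 1)) ℝ, IsMechanism Q ∧ SatisfiesLinearPML p ε Q ∧
      utility μ P ≤ utility μ Q := by
  let Q : Matrix (Fin N) (Fin (M + 1)) ℝ := of fun i => Fin.snoc (P i) 0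
  have hlast (i : Fin N) : Q i (Fin.last M) = 0 := by simp [Q]
  have hQP : Q.submatrix id (Fin.last M).succAbove = P := by
    ext i k
    simp [Q]
  refine ⟨Q, (isMechanism_submatrix_succAbove_iff hlast).1 (hQP ▸ hP),
    (satisfiesLinearPML_submatrix_succAbove_iff hlast).1 (hQP ▸ hlin), ?_⟩
  rw [← utility_submatrix_succAbove hμ hlast, hQP]

theorem exists_outputs_of_le (hμ : PosHomogeneous μ) {P : Matrix (Fin N) (Fin M) ℝ}
    (hP : IsMechanism P) (hlin : SatisfiesLinearPML p ε P) {K : ℕ} (hMK : M ≤ K) :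
    ∃ Q : Matrix (Fin N) (Fin K) ℝ, IsMechanism Q ∧ SatisfiesLinearPML p ε Q ∧
      utility μ P ≤ utility μ Q := by
  induction K, hMK using Nat.le_induction with
  | base => exact ⟨P, hP, hlin, le_rfl⟩
  | succ K _ ih =>
    obtain ⟨Q, hQ, hQlin, hle⟩ := ih
    obtain ⟨Q', hQ', hQ'lin, hle'⟩ := exists_outputs_succ hμ hQ hQlin
    exact ⟨Q', hQ', hQ'lin, hle.trans hle'⟩

theorem exists_square_of_le (hμ : PosHomogeneous μ) (hNM : N ≤ M) {P : Matrix (Fin N) (Fin M) ℝ}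
    (hP : IsMechanism P) (hlin : SatisfiesLinearPML p ε P) :
    ∃ Q : Matrix (Fin N) (Fin N) ℝ, IsMechanism Q ∧ SatisfiesLinearPML p ε Q ∧
      utility μ P ≤ utility μ Q := by
  induction M, hNM using Nat.le_induction with
  | base => exact ⟨P, hP, hlin, le_rfl⟩
  | succ M hNM ih =>
    obtain ⟨Q, hQ, hQlin, hle⟩ := exists_outputs_pred_of_lt hμ hP hlin (Nat.lt_succ_of_le hNM)
    obtain ⟨Q', hQ', hQ'lin, hle'⟩ := ih hQ hQlin
    exact ⟨Q', hQ', hQ'lin, hle.trans hle'⟩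

theorem exists_square (hμ : PosHomogeneous μ) {P : Matrix (Fin N) (Fin M) ℝ}
    (hP : IsMechanism P) (hlin : SatisfiesLinearPML p ε P) :
    ∃ Q : Matrix (Fin N) (Fin N) ℝ, IsMechanism Q ∧ SatisfiesLinearPML p ε Q ∧
      utility μ P ≤ utility μ Q :=
  (le_total M N).elim (exists_outputs_of_le hμ hP hlin)
    fun hNM => exists_square_of_le hμ hNM hP hlin

end Reduction

theorem cardinality_bound_general (N : ℕ) (hN : 1 ≤ N) (p : Fin N → ℝ)
    (hp : ∀ i, 0 < p i)
    (ε : ℝ)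
    (μ : (Fin N → ℝ) → ℝ) (hμ : Sublinear μ) :
    (∀ M : ℕ, 1 ≤ M → ∀ P : Matrix (Fin N) (Fin M) ℝ,
      IsMechanism P → SatisfiesPML p ε P →
      ∃ Q : Matrix (Fin N) (Fin N) ℝ, IsMechanism Q ∧ SatisfiesPML p ε Q ∧
        utility μ P ≤ utility μ Q) ∧
    sSup {u : ℝ | ∃ M : ℕ, 1 ≤ M ∧ ∃ P : Matrix (Fin N) (Fin M) ℝ,
        IsMechanism P ∧ SatisfiesPML p ε P ∧ u = utility μ P}
      = sSup {u : ℝ | ∃ M : ℕ, 1 ≤ M ∧ M ≤ N ∧ ∃ P : Matrix (Fin N) (Fin M) ℝ,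
        IsMechanism P ∧ SatisfiesPML p ε P ∧ u = utility μ P} := by
  have reduce (M : ℕ) (_ : 1 ≤ M) (P : Matrix (Fin N) (Fin M) ℝ) (hP : IsMechanism P)
      (hPML : SatisfiesPML p ε P) :
      ∃ Q : Matrix (Fin N) (Fin N) ℝ, IsMechanism Q ∧ SatisfiesPML p ε Q ∧
        utility μ P ≤ utility μ Q := by
    obtain ⟨Q, hQ, hQlin, hle⟩ :=
      exists_square hμ.posHomogeneous hP ((satisfiesPML_iff_linear hp hP.1).1 hPML)
    exact ⟨Q, hQ, (satisfiesPML_iff_linear hp hQ.1).2 hQlin, hle⟩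
  refine ⟨reduce, csSup_eq_csSup_of_forall_exists_le ?_ ?_⟩
  · rintro u ⟨M, hM, P, hP, hPML, rfl⟩
    obtain ⟨Q, hQ, hQPML, hle⟩ := reduce M hM P hP hPML
    exact ⟨utility μ Q, ⟨N, hN, le_rfl, Q, hQ, hQPML, rfl⟩, hle⟩
  · rintro u ⟨M, hM, -, P, hP, hPML, rfl⟩
    exact ⟨utility μ P, ⟨M, hM, P, hP, hPML, rfl⟩, le_rfl⟩

/-- **Cardinality bound.** For every `N × M` mechanism satisfying
`ε`-PML there is an `N × N` mechanism satisfying `ε`-PML with at least the same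
sub-convex utility; in particular the supremum of the utility over `ε`-PML
mechanisms with arbitrary finite output alphabets equals the supremum over
mechanisms with at most `N` outputs. -/
theorem cardinality_bound (N : ℕ) (hN : 1 ≤ N) (p : Fin N → ℝ)
    (hp : ∀ i, 0 < p i) (hpsum : ∑ i, p i = 1)
    (ε : ℝ) (hε : 0 ≤ ε)
    (μ : (Fin N → ℝ) → ℝ) (hμ : Sublinear μ) :
    (∀ M : ℕ, 1 ≤ M → ∀ P : Matrix (Fin N) (Fin M) ℝ,
      IsMechanism P → SatisfiesPML p ε P →
      ∃ Q : Matrix (Fin N) (Fin N) ℝ, IsMechanism Q ∧ SatisfiesPML p ε Q ∧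
        utility μ P ≤ utility μ Q) ∧
    sSup {u : ℝ | ∃ M : ℕ, 1 ≤ M ∧ ∃ P : Matrix (Fin N) (Fin M) ℝ,
        IsMechanism P ∧ SatisfiesPML p ε P ∧ u = utility μ P}
      = sSup {u : ℝ | ∃ M : ℕ, 1 ≤ M ∧ M ≤ N ∧ ∃ P : Matrix (Fin N) (Fin M) ℝ,
        IsMechanism P ∧ SatisfiesPML p ε P ∧ u = utility μ P} :=
  cardinality_bound_general N hN p hp ε μ hμ
end

section
/- Let N ≥ 2, let p be a full-support prior on {x_1,…,x_N}, and let ε_r ≥ 0. For the randomized response mechanism R with parameter ε_r (R(i,i) = e^{ε_r}/((N−1)+e^{ε_r}) and R(i,j) = 1/((N−1)+e^{ε_r}) for i ≠ j), the maximum pointwise maximal leakage over all outputs equals max_{1≤j≤N} ℓ(X→y_j) = log( e^{ε_r} / ((e^{ε_r}−1)·min_{1≤i≤N} p_i + 1) ). -/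
open scoped BigOperators Classical

/-- The randomized response mechanism with parameter `εr`. -/
noncomputable def randResp (N : ℕ) (εr : ℝ) : Matrix (Fin N) (Fin N) ℝ :=
  Matrix.of fun i j =>
    if i = j then Real.exp εr / (((N : ℝ) - 1) + Real.exp εr)
    else 1 / (((N : ℝ) - 1) + Real.exp εr)

/-
The leakage of output `j` is `log (e^ε / ((e^ε - 1) p_j + 1))`: the column maximum `e^ε / D`
sits on the diagonal, and the output probability is `((e^ε - 1) p_j + 1) / D`, so the common
denominator `D = N - 1 + e^ε` cancels. For `e^ε ≥ 1` this expression is antitone in `p_j`,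
so the largest leakage belongs to the least likely input.
-/

theorem ciSup_eq_of_forall_le_apply {ι α : Type*} [ConditionallyCompleteLattice α]
    {f : ι → α} {j : ι} (h : ∀ i, f i ≤ f j) : ⨆ i, f i = f j :=
  have : Nonempty ι := ⟨j⟩
  le_antisymm (ciSup_le h) (le_ciSup ⟨f j, Set.forall_mem_range.2 h⟩ j)

theorem ciInf_eq_of_forall_apply_le {ι α : Type*} [ConditionallyCompleteLattice α]
    {f : ι → α} {j : ι} (h : ∀ i, f j ≤ f i) : ⨅ i, f i = f j :=
  ciSup_eq_of_forall_le_apply (α := αᵒᵈ) h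

theorem AntitoneOn.ciSup_comp_eq_comp_ciInf {ι : Type*} [Finite ι] [Nonempty ι]
    {f : ι → ℝ} {g : ℝ → ℝ} (hg : AntitoneOn g (Set.range f)) :
    ⨆ j, g (f j) = g (⨅ i, f i) := by
  obtain ⟨i₀, hi₀⟩ := Finite.exists_min f
  rw [ciInf_eq_of_forall_apply_le hi₀]
  exact ciSup_eq_of_forall_le_apply fun j ↦ hg ⟨i₀, rfl⟩ ⟨j, rfl⟩ (hi₀ j)

theorem antitoneOn_log_div_sub_one_mul_add_one {c : ℝ} (hc : 1 ≤ c) :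
    AntitoneOn (fun q ↦ Real.log (c / ((c - 1) * q + 1))) (Set.Ici 0) := by
  intro a (ha : 0 ≤ a) b _ hab
  have hden_pos : 0 < (c - 1) * a + 1 := by nlinarith
  dsimp only
  gcongr
  exact div_pos (by linarith) (by nlinarith)

section randResp

variable {N : ℕ} {εr : ℝ}

theorem natCast_sub_one_add_exp_pos (hN : 0 < N) (x : ℝ) : 0 < ((N : ℝ) - 1) + Real.exp x := by
  have : (1 : ℝ) ≤ N := by exact_mod_cast hN
  linarith [Real.exp_pos x]

theorem randResp_apply (i j : Fin N) :
    randResp N εr i j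
      = (1 + if i = j then Real.exp εr - 1 else 0) / (((N : ℝ) - 1) + Real.exp εr) := by
  by_cases h : i = j <;> simp [randResp, h]

theorem iSup_randResp_apply (hεr : 0 ≤ εr) (j : Fin N) :
    ⨆ i, randResp N εr i j = Real.exp εr / (((N : ℝ) - 1) + Real.exp εr) := by
  have hdiag : randResp N εr j j = Real.exp εr / (((N : ℝ) - 1) + Real.exp εr) := by
    simp [randResp]
  rw [← hdiag]
  refine ciSup_eq_of_forall_le_apply fun i ↦ ?_
  rw [randResp_apply, randResp_apply, if_pos rfl]
  have := natCast_sub_one_add_exp_pos j.pos εr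
  split_ifs
  · rfl
  · gcongr
    linarith [Real.add_one_le_exp εr]

theorem outDist_randResp {p : Fin N → ℝ} (hpsum : ∑ i, p i = 1) (j : Fin N) :
    outDist p (randResp N εr) j
      = ((Real.exp εr - 1) * p j + 1) / (((N : ℝ) - 1) + Real.exp εr) := by
  simp only [outDist, randResp_apply, mul_div_assoc', mul_add, mul_one, ← Finset.sum_div,
    Finset.sum_add_distrib, hpsum, mul_ite, mul_zero, Finset.sum_ite_eq', Finset.mem_univ,
    if_true]
  ring

theorem pml_randResp {p : Fin N → ℝ} (hpsum : ∑ i, p i = 1) (hεr : 0 ≤ εr) (j : Fin N) :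
    pml p (randResp N εr) j = Real.log (Real.exp εr / ((Real.exp εr - 1) * p j + 1)) := by
  rw [pml, iSup_randResp_apply hεr, outDist_randResp hpsum,
    div_div_div_cancel_right₀ (natCast_sub_one_add_exp_pos j.pos εr).ne']

end randResp

/-- The maximum pointwise maximal leakage of randomized
response over all outputs equals
`log(e^{εr} / ((e^{εr} − 1)·min_i p_i + 1))`. -/
theorem randResp_max_pml (N : ℕ) (hN : 2 ≤ N) (p : Fin N → ℝ)
    (hp : ∀ i, 0 < p i) (hpsum : ∑ i, p i = 1) (εr : ℝ) (hεr : 0 ≤ εr) :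
    (⨆ j, pml p (randResp N εr) j)
      = Real.log (Real.exp εr / ((Real.exp εr - 1) * (⨅ i, p i) + 1)) := by
  have : Nonempty (Fin N) := ⟨⟨0, by omega⟩⟩
  simp only [pml_randResp hpsum hεr]
  refine AntitoneOn.ciSup_comp_eq_comp_ciInf
    ((antitoneOn_log_div_sub_one_mul_add_one (Real.one_le_exp hεr)).mono ?_)
  rintro _ ⟨i, rfl⟩
  exact (hp i).le
end

section
/- Fix N ≥ 2 and ε_r ≥ 0. Define the function ε(p) = log( e^{ε_r} / ((e^{ε_r}−1)·min_{1≤i≤N} p_i + 1) ) on probability vectors p ∈ [0,1]^N (with ∑_i p_i = 1). This function is Schur-convex: if p and q are probability vectors in ℝ^N and p majorizes q, then ε(p) ≥ ε(q). -/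
open scoped BigOperators Classical

noncomputable section

/-- The sum of the `m` largest entries of `u`, expressed as the supremum of
sums of `u` over subsets of cardinality `m`. -/
def topSum {N : ℕ} (u : Fin N → ℝ) (m : ℕ) : ℝ :=
  sSup {x : ℝ | ∃ s : Finset (Fin N), s.card = m ∧ x = ∑ i ∈ s, u i}

/-- `u` majorizes `v`: same total sum, and for every `m` the sum of the `m`
largest entries of `u` is at least that of `v`. -/
def Majorizes {N : ℕ} (u v : Fin N → ℝ) : Prop :=
  (∑ i, u i = ∑ i, v i) ∧ ∀ m : ℕ, 1 ≤ m → m ≤ N → topSum v m ≤ topSum u m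

end

/-- **Schur-convexity.** The maximal PML of randomized response,
`ε(p) = log(e^{εr}/((e^{εr}−1)·min_i p_i + 1))`, is Schur-convex in the prior. -/
theorem randResp_pml_schur_convex (N : ℕ) (hN : 2 ≤ N) (εr : ℝ) (hεr : 0 ≤ εr)
    (p q : Fin N → ℝ)
    (hp0 : ∀ i, 0 ≤ p i) (hp1 : ∀ i, p i ≤ 1) (hpsum : ∑ i, p i = 1)
    (hq0 : ∀ i, 0 ≤ q i) (hq1 : ∀ i, q i ≤ 1) (hqsum : ∑ i, q i = 1)
    (hmaj : Majorizes p q) :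
    Real.log (Real.exp εr / ((Real.exp εr - 1) * (⨅ i, q i) + 1))
      ≤ Real.log (Real.exp εr / ((Real.exp εr - 1) * (⨅ i, p i) + 1)) := by
  have hNpos : 0 < N := by omega
  haveI : Nonempty (Fin N) := ⟨⟨0, hNpos⟩⟩
  -- key: ⨅ p ≤ ⨅ q
  have hmin : (⨅ i, p i) ≤ ⨅ i, q i := by
    -- use m = N - 1
    have hts : topSum q (N - 1) ≤ topSum p (N - 1) := hmaj.2 (N - 1) (by omega) (by omega)
    have hbdd : ∀ u : Fin N → ℝ,
        BddAbove {x : ℝ | ∃ s : Finset (Fin N), s.card = N - 1 ∧ x = ∑ i ∈ s, u i} := by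
      intro u
      have : {x : ℝ | ∃ s : Finset (Fin N), s.card = N - 1 ∧ x = ∑ i ∈ s, u i} ⊆
          (fun s : Finset (Fin N) => ∑ i ∈ s, u i) '' Set.univ := by
        rintro x ⟨s, _, rfl⟩; exact ⟨s, trivial, rfl⟩
      exact (Set.Finite.image _ (Set.finite_univ)).subset this |>.bddAbove
    -- upper bound for topSum p (N-1)
    have hub : topSum p (N - 1) ≤ 1 - ⨅ i, p i := by
      apply csSup_le
      · refine ⟨∑ i ∈ ({⟨0, hNpos⟩} : Finset (Fin N))ᶜ, p i, ({⟨0, hNpos⟩} : Finset (Fin N))ᶜ, ?_, rfl⟩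
        simp [Finset.card_compl]
      · rintro x ⟨s, hcard, rfl⟩
        have hsne : s ≠ Finset.univ := by
          intro h; rw [h] at hcard; simp at hcard; omega
        obtain ⟨j, hj⟩ : ∃ j, j ∉ s := by
          by_contra h; push_neg at h
          exact hsne (Finset.eq_univ_iff_forall.2 h)
        have hsub : s ⊆ {j}ᶜ := by
          intro i hi; simp; rintro rfl; exact hj hi
        have h1 : ∑ i ∈ s, p i ≤ ∑ i ∈ ({j} : Finset (Fin N))ᶜ, p i :=
          Finset.sum_le_sum_of_subset_of_nonneg hsub (fun i _ _ => hp0 i)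
        have h2 : ∑ i ∈ ({j} : Finset (Fin N))ᶜ, p i = 1 - p j := by
          have := Finset.sum_compl_add_sum ({j} : Finset (Fin N)) p
          simp at this; linarith [this]
        have h3 : (⨅ i, p i) ≤ p j :=
          ciInf_le (Set.finite_range p).bddBelow j
        linarith
    -- lower bound for topSum q (N-1)
    have hlb : 1 - (⨅ i, q i) ≤ topSum q (N - 1) := by
      obtain ⟨j, _, hj⟩ := Finset.exists_min_image Finset.univ q ⟨⟨0, hNpos⟩, Finset.mem_univ _⟩
      have hjq : (⨅ i, q i) = q j :=
        le_antisymm (ciInf_le (Set.finite_range q).bddBelow j)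
          (le_ciInf fun i => hj i (Finset.mem_univ i))
      have hmem : (1 - q j) ∈ {x : ℝ | ∃ s : Finset (Fin N), s.card = N - 1 ∧ x = ∑ i ∈ s, q i} := by
        refine ⟨({j} : Finset (Fin N))ᶜ, by simp [Finset.card_compl], ?_⟩
        have := Finset.sum_compl_add_sum ({j} : Finset (Fin N)) q
        simp at this; linarith [this]
      rw [hjq]
      exact le_csSup (hbdd q) hmem
    have := le_trans hlb (le_trans hts hub)
    linarith
  -- finish
  set a := Real.exp εr - 1 with ha
  have ha0 : 0 ≤ a := by
    have := Real.one_le_exp hεr; simp [ha]; linarith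
  have hminp0 : 0 ≤ ⨅ i, p i := le_ciInf hp0
  have hminq0 : 0 ≤ ⨅ i, q i := le_ciInf hq0
  have hdp : 0 < a * (⨅ i, p i) + 1 := by nlinarith
  have hdq : 0 < a * (⨅ i, q i) + 1 := by nlinarith
  have hexp : 0 < Real.exp εr := Real.exp_pos εr
  have hdiv : Real.exp εr / (a * (⨅ i, q i) + 1) ≤ Real.exp εr / (a * (⨅ i, p i) + 1) := by
    apply div_le_div_of_nonneg_left hexp.le hdp
    nlinarith
  exact Real.log_le_log (div_pos hexp hdq) hdiv
end

section
/- Let N = 2, let p = (p_1, p_2) be a prior with 1 > p_1 ≥ p_2 > 0 and p_1 + p_2 = 1, and let 0 ≤ ε ≤ −log p_2. Define the 2×2 mechanism P* as follows: if p_1 < e^{−ε}, let P* = [[e^ε p_2, 1 − e^ε p_2], [1 − e^ε p_1, e^ε p_1]]; if p_1 ≥ e^{−ε}, let P* = [[(e^ε − 1)/(e^ε p_1), (1 − e^ε p_2)/(e^ε p_1)], [0, 1]]. Then P* is a valid privacy mechanism satisfying ε-PML, and for every sublinear μ : [0,∞)^2 → [0,∞), P* maximizes the associated sub-convex utility U over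 M_2(ε), i.e., U(P*) ≥ U(Q) for every Q ∈ M_2(ε). -/
open scoped BigOperators Classical

/-- The optimal binary mechanism of Theorem 2. -/
noncomputable def binMech (p1 p2 ε : ℝ) : Matrix (Fin 2) (Fin 2) ℝ :=
  if p1 < Real.exp (-ε) then
    !![Real.exp ε * p2, 1 - Real.exp ε * p2;
       1 - Real.exp ε * p1, Real.exp ε * p1]
  else
    !![(Real.exp ε - 1) / (Real.exp ε * p1), (1 - Real.exp ε * p2) / (Real.exp ε * p1);
       0, 1]

/-!
The ε-PML constraint says that every column `v` of a mechanism lies in the cone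
`{v ≥ 0 | vᵢ ≤ e^ε ⟨p, v⟩}`. For two inputs this cone is spanned by the two columns of
`binMech`, and since the rows of `binMech` and of any feasible `Q` sum to one, the coordinates
of the columns of `Q` in this basis form a mechanism `A` with `Q = binMech * A`. A sub-convex
utility cannot increase under such post-processing: by sublinearity
`μ (∑ₖ Aₖⱼ gₖ) ≤ ∑ₖ Aₖⱼ μ gₖ`, and the rows of `A` sum to one.
-/

open Real Matrix

lemma exists_pos_of_outDist_pos {N M : ℕ} {p : Fin N → ℝ} {P : Matrix (Fin N) (Fin M) ℝ}
    {j : Fin M} (hp : ∀ i, 0 ≤ p i) (hj : 0 < outDist p P j) : ∃ i, 0 < P i j := by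
  obtain ⟨i, -, hi⟩ := Finset.exists_lt_of_sum_lt (s := .univ) (f := fun _ => 0)
    (g := fun i => p i * P i j) (by simpa [outDist] using hj)
  exact ⟨i, pos_of_mul_pos_right hi (hp i)⟩

lemma satisfiesPML_iff {N M : ℕ} {p : Fin N → ℝ} {ε : ℝ} {P : Matrix (Fin N) (Fin M) ℝ}
    (hp : ∀ i, 0 < p i) (hP : ∀ i j, 0 ≤ P i j) :
    SatisfiesPML p ε P ↔ ∀ i j, P i j ≤ exp ε * outDist p P j := by
  have key : ∀ j, 0 < outDist p P j →
      (pml p P j ≤ ε ↔ ∀ i, P i j ≤ exp ε * outDist p P j) := by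
    intro j hj
    obtain ⟨i₀, hi₀⟩ := exists_pos_of_outDist_pos (fun i => (hp i).le) hj
    have : Nonempty (Fin N) := ⟨i₀⟩
    have hbdd : BddAbove (Set.range fun i => P i j) := (Set.finite_range _).bddAbove
    have hsup : 0 < ⨆ i, P i j := hi₀.trans_le (le_ciSup hbdd i₀)
    rw [pml, log_le_iff_le_exp (div_pos hsup hj), div_le_iff₀ hj, mul_comm, ciSup_le_iff hbdd]
  refine ⟨fun h i j => ?_, fun h j hj => (key j hj).2 fun i => h i j⟩
  rcases (Finset.sum_nonneg fun i _ => mul_nonneg (hp i).le (hP i j)).eq_or_lt with h0 | hpos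
  · have hterm := (Finset.sum_eq_zero_iff_of_nonneg fun i _ => mul_nonneg (hp i).le (hP i j)).1
      h0.symm i (Finset.mem_univ i)
    rw [outDist, ← h0, (mul_eq_zero.1 hterm).resolve_left (hp i).ne', mul_zero]
  · exact (key j hpos).1 (h j hpos) i

lemma Sublinear.map_sum_smul_le {N : ℕ} {μ : (Fin N → ℝ) → ℝ} (hμ : Sublinear μ) {ι : Type*}
    (s : Finset ι) {a : ι → ℝ} {g : ι → Fin N → ℝ} (ha : ∀ k, 0 ≤ a k) (hg : ∀ k i, 0 ≤ g k i) :
    μ (∑ k ∈ s, a k • g k) ≤ ∑ k ∈ s, a k * μ (g k) := by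
  obtain ⟨-, hsmul, hadd⟩ := hμ
  classical
  induction s using Finset.induction_on with
  | empty =>
    have h := hsmul 0 le_rfl 0 fun _ => le_rfl
    simp only [smul_zero, zero_mul] at h
    simp [h]
  | insert k s hk ih =>
    have hnn : ∀ i, 0 ≤ (∑ l ∈ s, a l • g l) i := fun i => by
      simpa using Finset.sum_nonneg fun l _ => mul_nonneg (ha l) (hg l i)
    rw [Finset.sum_insert hk, Finset.sum_insert hk]
    calc μ (a k • g k + ∑ l ∈ s, a l • g l)
        ≤ μ (a k • g k) + μ (∑ l ∈ s, a l • g l) :=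
          hadd _ _ (fun i => mul_nonneg (ha k) (hg k i)) hnn
      _ ≤ a k * μ (g k) + ∑ l ∈ s, a l * μ (g l) := by
          rw [hsmul _ (ha k) _ (hg k)]; gcongr

lemma utility_mul_le {N K M : ℕ} {μ : (Fin N → ℝ) → ℝ} (hμ : Sublinear μ)
    {G : Matrix (Fin N) (Fin K) ℝ} {A : Matrix (Fin K) (Fin M) ℝ}
    (hG : ∀ i k, 0 ≤ G i k) (hA : IsMechanism A) :
    utility μ (G * A) ≤ utility μ G := by
  have hcol : ∀ j, (fun i => (G * A) i j) = ∑ k, A k j • fun i => G i k := fun j => by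
    ext i; simp [Matrix.mul_apply, Finset.sum_apply, mul_comm]
  calc utility μ (G * A) = ∑ j, μ (∑ k, A k j • fun i => G i k) := by simp only [utility, hcol]
    _ ≤ ∑ j, ∑ k, A k j * μ (fun i => G i k) :=
        Finset.sum_le_sum fun j _ => hμ.map_sum_smul_le _ (fun k => hA.1 k j) fun k i => hG i k
    _ = utility μ G := by
        rw [Finset.sum_comm]; simp [utility, ← Finset.sum_mul, hA.2]

lemma sum_inv_mul_apply_eq_one {n m : ℕ} {B : Matrix (Fin n) (Fin n) ℝ} {Q : Matrix (Fin n) (Fin m) ℝ}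
    (hdet : IsUnit B.det) (hB : ∀ i, ∑ j, B i j = 1) (hQ : ∀ i, ∑ j, Q i j = 1) :
    ∀ i, ∑ j, (B⁻¹ * Q) i j = 1 := by
  have rowSum : ∀ {k : ℕ} (R : Matrix (Fin n) (Fin k) ℝ), (∀ i, ∑ j, R i j = 1) ↔ R *ᵥ 1 = 1 :=
    fun R => by simp [funext_iff, Matrix.mulVec, dotProduct]
  rw [rowSum] at hB hQ ⊢
  calc (B⁻¹ * Q) *ᵥ 1 = B⁻¹ *ᵥ (B *ᵥ 1) := by rw [← mulVec_mulVec, hQ, hB]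
    _ = 1 := by rw [mulVec_mulVec, nonsing_inv_mul _ hdet, one_mulVec]

lemma exists_isMechanism_mul_eq_of_fin_two {m : ℕ} {B : Matrix (Fin 2) (Fin 2) ℝ}
    {Q : Matrix (Fin 2) (Fin m) ℝ} (hdet : 0 < B.det) (hB : ∀ i, ∑ j, B i j = 1)
    (hQ : ∀ i, ∑ j, Q i j = 1) (h₀ : ∀ j, B 0 1 * Q 1 j ≤ B 1 1 * Q 0 j)
    (h₁ : ∀ j, B 1 0 * Q 0 j ≤ B 0 0 * Q 1 j) :
    ∃ A : Matrix (Fin 2) (Fin m) ℝ, IsMechanism A ∧ B * A = Q := by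
  have hunit : IsUnit B.det := hdet.ne'.isUnit
  refine ⟨B⁻¹ * Q, ⟨fun k j => ?_, sum_inv_mul_apply_eq_one hunit hB hQ⟩,
    mul_nonsing_inv_cancel_left _ _ hunit⟩
  rw [inv_def, adjugate_fin_two, Ring.inverse_eq_inv']
  have hinv : 0 ≤ B.det⁻¹ := inv_nonneg.2 hdet.le
  fin_cases k <;> simp [mul_apply, Fin.sum_univ_two, mul_assoc]
  exacts [mul_le_mul_of_nonneg_left (h₀ j) hinv, mul_le_mul_of_nonneg_left (h₁ j) hinv]

lemma mul_eq_self_of_rows_eq {n m : ℕ} {B : Matrix (Fin n) (Fin n) ℝ}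
    {Q : Matrix (Fin n) (Fin m) ℝ} (hB : ∀ i, ∑ j, B i j = 1) {q : Fin m → ℝ}
    (hQ : ∀ i j, Q i j = q j) : B * Q = Q := by
  ext i j
  rw [Matrix.mul_apply, hQ i j]
  simp only [hQ _ j, ← Finset.sum_mul, hB, one_mul]

lemma outDist_fin_two {M : ℕ} (p1 p2 : ℝ) (P : Matrix (Fin 2) (Fin M) ℝ) (j : Fin M) :
    outDist ![p1, p2] P j = p1 * P 0 j + p2 * P 1 j := by
  simp [outDist, Fin.sum_univ_two]

lemma isMechanism_of_fin_two {a b c d : ℝ} (ha : 0 ≤ a) (hb : 0 ≤ b) (hc : 0 ≤ c) (hd : 0 ≤ d)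
    (hab : a + b = 1) (hcd : c + d = 1) : IsMechanism !![a, b; c, d] :=
  ⟨fun i j => by fin_cases i <;> fin_cases j <;> assumption,
    fun i => by fin_cases i <;> simpa [Fin.sum_univ_two]⟩

lemma lt_exp_neg_iff {x ε : ℝ} : x < exp (-ε) ↔ exp ε * x < 1 := by
  rw [exp_neg, ← mul_one (exp ε)⁻¹, lt_inv_mul_iff₀ (exp_pos ε)]

section binMech

variable {p1 p2 ε : ℝ}

lemma binMech_of_mul_lt_one (h : exp ε * p1 < 1) :
    binMech p1 p2 ε = !![exp ε * p2, 1 - exp ε * p2; 1 - exp ε * p1, exp ε * p1] :=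
  if_pos (lt_exp_neg_iff.2 h)

lemma binMech_of_one_le_mul (h : 1 ≤ exp ε * p1) :
    binMech p1 p2 ε = !![(exp ε - 1) / (exp ε * p1), (1 - exp ε * p2) / (exp ε * p1); 0, 1] :=
  if_neg (lt_exp_neg_iff.not.2 h.not_gt)

lemma isMechanism_binMech (hp1 : 0 ≤ p1) (hp2 : 0 ≤ p2) (hsum : p1 + p2 = 1) (hε : 0 ≤ ε)
    (hEp2 : exp ε * p2 ≤ 1) : IsMechanism (binMech p1 p2 ε) := by
  have hE : 1 ≤ exp ε := one_le_exp hε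
  rcases lt_or_ge (exp ε * p1) 1 with h | h
  · rw [binMech_of_mul_lt_one h]
    exact isMechanism_of_fin_two (by positivity) (by linarith) (by linarith) (by positivity)
      (by ring) (by ring)
  · rw [binMech_of_one_le_mul h]
    have hpos : 0 < exp ε * p1 := by linarith
    refine isMechanism_of_fin_two (div_nonneg (by linarith) hpos.le)
      (div_nonneg (by linarith) hpos.le) le_rfl zero_le_one ?_ (zero_add 1)
    rw [← add_div, div_eq_one_iff_eq hpos.ne']
    linear_combination (-exp ε) * hsum

lemma satisfiesPML_binMech (hp1 : 0 < p1) (hp2 : 0 < p2) (hsum : p1 + p2 = 1) (hε : 0 ≤ ε)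
    (hEp2 : exp ε * p2 ≤ 1) : SatisfiesPML ![p1, p2] ε (binMech p1 p2 ε) := by
  rw [satisfiesPML_iff (Fin.forall_fin_two.2 ⟨hp1, hp2⟩)
    (isMechanism_binMech hp1.le hp2.le hsum hε hEp2).1]
  have hE : 1 ≤ exp ε := one_le_exp hε
  simp only [outDist_fin_two, Fin.forall_fin_two]
  have hEsum : exp ε * p1 + exp ε * p2 = exp ε := by rw [← mul_add, hsum, mul_one]
  rcases lt_or_ge (exp ε * p1) 1 with h | h
  · rw [binMech_of_mul_lt_one h]
    have hcol₀ : exp ε * (p1 * (exp ε * p2) + p2 * (1 - exp ε * p1)) = exp ε * p2 := by ring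
    have hcol₁ : exp ε * (p1 * (1 - exp ε * p2) + p2 * (exp ε * p1)) = exp ε * p1 := by ring
    simp only [of_apply, cons_val', cons_val_zero, cons_val_fin_one, cons_val_one, hcol₀, hcol₁]
    exact ⟨⟨le_rfl, by linarith⟩, by linarith, le_rfl⟩
  · rw [binMech_of_one_le_mul h]
    have hpos : 0 < exp ε * p1 := by linarith
    have hcol₀ : exp ε * (p1 * ((exp ε - 1) / (exp ε * p1))) = exp ε - 1 := by
      field_simp
    have hcol₁ : exp ε * (p1 * ((1 - exp ε * p2) / (exp ε * p1)) + p2) = 1 := by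
      field_simp; ring
    simp only [of_apply, cons_val', cons_val_zero, cons_val_fin_one, cons_val_one, mul_zero,
      add_zero, mul_one, hcol₀, hcol₁]
    exact ⟨⟨div_le_self (by linarith) h, (div_le_one hpos).2 (by linarith)⟩, by linarith, le_rfl⟩

lemma exists_isMechanism_binMech_mul_eq (hp1 : 0 < p1) (hp2 : 0 < p2) (hsum : p1 + p2 = 1)
    (hε : 0 ≤ ε) (hEp2 : exp ε * p2 ≤ 1) {M : ℕ} {Q : Matrix (Fin 2) (Fin M) ℝ}
    (hQ : IsMechanism Q) (hQpml : SatisfiesPML ![p1, p2] ε Q) :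
    ∃ A : Matrix (Fin 2) (Fin M) ℝ, IsMechanism A ∧ binMech p1 p2 ε * A = Q := by
  have hcone := (satisfiesPML_iff (Fin.forall_fin_two.2 ⟨hp1, hp2⟩) hQ.1).1 hQpml
  simp only [outDist_fin_two, Fin.forall_fin_two] at hcone
  obtain ⟨hcone₀, hcone₁⟩ := hcone
  have hB := isMechanism_binMech hp1.le hp2.le hsum hε hEp2
  have hE : 1 ≤ exp ε := one_le_exp hε
  have hEsum : exp ε * p1 + exp ε * p2 = exp ε := by rw [← mul_add, hsum, mul_one]
  rcases lt_or_ge (exp ε * p1) 1 with h | h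
  · rcases hE.eq_or_lt with hE1 | hE1
    · -- `binMech` is singular when `ε = 0`, but then every feasible `Q` has equal rows.
      have hrows : ∀ j, Q 0 j = Q 1 j := fun j => by
        have h₀ := hcone₀ j
        have h₁ := hcone₁ j
        rw [← hE1, one_mul] at h₀ h₁
        exact le_antisymm (le_of_mul_le_mul_left (by linear_combination h₀ + Q 0 j * hsum) hp2)
          (le_of_mul_le_mul_left (by linear_combination h₁ + Q 1 j * hsum) hp1)
      exact ⟨Q, hQ, mul_eq_self_of_rows_eq hB.2 (Fin.forall_fin_two.2 ⟨hrows, fun _ => rfl⟩)⟩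
    · refine exists_isMechanism_mul_eq_of_fin_two ?_ hB.2 hQ.2 (fun j => ?_) (fun j => ?_) <;>
        simp only [binMech_of_mul_lt_one h, det_fin_two_of, of_apply, cons_val', cons_val_zero,
          cons_val_one, cons_val_fin_one, sub_pos]
      · linarith
      · linarith [hcone₁ j]
      · linarith [hcone₀ j]
  · have hpos : 0 < exp ε * p1 := by linarith
    have hE1 : 1 < exp ε := by linarith [mul_pos (exp_pos ε) hp2]
    refine exists_isMechanism_mul_eq_of_fin_two ?_ hB.2 hQ.2 (fun j => ?_) (fun j => ?_) <;>
      simp only [binMech_of_one_le_mul h, det_fin_two_of, of_apply, cons_val', cons_val_zero,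
        cons_val_one, cons_val_fin_one, mul_one, one_mul, mul_zero, zero_mul, sub_zero]
    · exact div_pos (by linarith) hpos
    · rw [div_mul_eq_mul_div, div_le_iff₀ hpos]
      linarith [hcone₁ j]
    · exact mul_nonneg (div_nonneg (by linarith) hpos.le) (hQ.1 1 j)

end binMech

theorem binary_mech_optimal_general (p1 p2 : ℝ) (hord : p2 ≤ p1)
    (hp2 : 0 < p2) (hsum : p1 + p2 = 1)
    (ε : ℝ) (hε0 : 0 ≤ ε) (hεmax : ε ≤ -Real.log p2) :
    IsMechanism (binMech p1 p2 ε) ∧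
    SatisfiesPML ![p1, p2] ε (binMech p1 p2 ε) ∧
    ∀ μ : (Fin 2 → ℝ) → ℝ, Sublinear μ →
      ∀ Q : Matrix (Fin 2) (Fin 2) ℝ, IsMechanism Q → SatisfiesPML ![p1, p2] ε Q →
        utility μ Q ≤ utility μ (binMech p1 p2 ε) := by
  have hp1 : 0 < p1 := hp2.trans_le hord
  have hEp2 : exp ε * p2 ≤ 1 :=
    calc exp ε * p2 ≤ exp (-log p2) * p2 := by gcongr
      _ = 1 := by rw [exp_neg, exp_log hp2, inv_mul_cancel₀ hp2.ne']
  have hB := isMechanism_binMech hp1.le hp2.le hsum hε0 hEp2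
  refine ⟨hB, satisfiesPML_binMech hp1 hp2 hsum hε0 hEp2, fun μ hμ Q hQ hQpml => ?_⟩
  obtain ⟨A, hA, rfl⟩ := exists_isMechanism_binMech_mul_eq hp1 hp2 hsum hε0 hEp2 hQ hQpml
  exact utility_mul_le hμ hB.1 hA

/-- **Optimal binary mechanism.** For a binary prior
`1 > p1 ≥ p2 > 0` and `0 ≤ ε ≤ −log p2`, the mechanism `binMech p1 p2 ε` is a
valid mechanism satisfying `ε`-PML and maximizes every sub-convex utility over
`M_2(ε)`. -/
theorem binary_mech_optimal (p1 p2 : ℝ) (hp1lt : p1 < 1) (hord : p2 ≤ p1)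
    (hp2 : 0 < p2) (hsum : p1 + p2 = 1)
    (ε : ℝ) (hε0 : 0 ≤ ε) (hεmax : ε ≤ -Real.log p2) :
    IsMechanism (binMech p1 p2 ε) ∧
    SatisfiesPML ![p1, p2] ε (binMech p1 p2 ε) ∧
    ∀ μ : (Fin 2 → ℝ) → ℝ, Sublinear μ →
      ∀ Q : Matrix (Fin 2) (Fin 2) ℝ, IsMechanism Q → SatisfiesPML ![p1, p2] ε Q →
        utility μ Q ≤ utility μ (binMech p1 p2 ε) :=
  binary_mech_optimal_general p1 p2 hord hp2 hsum ε hε0 hεmax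
end

section
/- Let p be a full-support prior on {x_1,…,x_N} ordered so that p_1 ≥ p_2 ≥ … ≥ p_N > 0, let k ∈ {1,…,N−1}, and suppose 0 ≤ ε < ε_k(p) := −log(∑_{i=1}^{N−k} p_i). Then for every N×N privacy mechanism P satisfying ε-PML with respect to p, every column j with P_Y(j) > 0 contains at most k−1 zero entries; i.e., #{i : P(i,j) = 0} ≤ k−1. -/
open scoped BigOperators Classical

lemma strictMono_nat_ge {n : ℕ} (f : Fin n → ℕ) (hf : StrictMono f) : ∀ r : Fin n, (r:ℕ) ≤ f r := by
  intro r
  obtain ⟨v, hv⟩ := r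
  induction v with
  | zero => exact Nat.zero_le _
  | succ m ih =>
      have hm : m < n := lt_trans (Nat.lt_succ_self m) hv
      have h1 := hf (show (⟨m, hm⟩ : Fin n) < ⟨m+1, hv⟩ by simp [Fin.lt_def])
      have h2 := ih hm
      simp only at h1 h2 ⊢
      omega

lemma sum_subset_le_top {N : ℕ} (p : Fin N → ℝ) (hp : ∀ i, 0 ≤ p i)
    (hord : ∀ i j : Fin N, i ≤ j → p j ≤ p i) (S : Finset (Fin N)) (m : ℕ) (hm : S.card ≤ m) :
    ∑ i ∈ S, p i ≤ ∑ i ∈ Finset.univ.filter (fun i : Fin N => (i:ℕ) < m), p i := by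
  have hSN : S.card ≤ N := by simpa using Finset.card_le_univ S
  set e := S.orderIsoOfFin (rfl : S.card = S.card)
  have hmono : StrictMono (fun r : Fin S.card => ((e r : Fin N) : ℕ)) := by
    intro a b hab
    exact_mod_cast e.strictMono hab
  have hle : ∀ r : Fin S.card, (r : ℕ) ≤ ((e r : Fin N) : ℕ) := strictMono_nat_ge _ hmono
  have h1 : ∑ i ∈ S, p i = ∑ r : Fin S.card, p (e r) := by
    rw [← Finset.sum_coe_sort S p]
    exact (Fintype.sum_equiv e.toEquiv _ _ (fun r => rfl)).symm
  have h2 : ∑ r : Fin S.card, p (e r) ≤ ∑ r : Fin S.card, p ⟨(r:ℕ), lt_of_lt_of_le r.2 hSN⟩ := by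
    apply Finset.sum_le_sum
    intro r _
    exact hord _ _ (by exact_mod_cast hle r)
  have h3 : ∑ r : Fin S.card, p ⟨(r:ℕ), lt_of_lt_of_le r.2 hSN⟩
      = ∑ i ∈ Finset.univ.filter (fun i : Fin N => (i:ℕ) < S.card), p i := by
    refine Finset.sum_bij' (fun (r : Fin S.card) (_ : r ∈ Finset.univ) => (⟨(r:ℕ), lt_of_lt_of_le r.2 hSN⟩ : Fin N))
      (fun i hi => (⟨(i:ℕ), (Finset.mem_filter.mp hi).2⟩ : Fin S.card)) ?_ ?_ ?_ ?_ ?_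
    · intro r _; simp [r.2]
    · intro i hi; simp
    · intro r _; rfl
    · intro i hi; rfl
    · intro r _; rfl
  have h4 : ∑ i ∈ Finset.univ.filter (fun i : Fin N => (i:ℕ) < S.card), p i
      ≤ ∑ i ∈ Finset.univ.filter (fun i : Fin N => (i:ℕ) < m), p i := by
    apply Finset.sum_le_sum_of_subset_of_nonneg
    · intro i hi
      simp only [Finset.mem_filter, Finset.mem_univ, true_and] at *
      omega
    · intro i _ _; exact hp i
  linarith


/-- **Privacy regions bound the number of zeros.** If the prior
is ordered non-increasingly and `ε < ε_k(p) = −log(∑_{i=1}^{N−k} p_i)`, then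
every positive-probability column of an `ε`-PML mechanism contains at most
`k − 1` zero entries. -/
theorem privacy_region_zero_bound (N : ℕ) (hN : 1 ≤ N) (p : Fin N → ℝ)
    (hp : ∀ i, 0 < p i) (hpsum : ∑ i, p i = 1)
    (hord : ∀ i j : Fin N, i ≤ j → p j ≤ p i)
    (k : ℕ) (hk1 : 1 ≤ k) (hk2 : k ≤ N - 1)
    (ε : ℝ) (hε0 : 0 ≤ ε)
    (hεk : ε < -Real.log (∑ i ∈ Finset.univ.filter (fun i : Fin N => (i : ℕ) < N - k), p i))
    (P : Matrix (Fin N) (Fin N) ℝ) (hP : IsMechanism P) (hPML : SatisfiesPML p ε P) :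
    ∀ j, 0 < outDist p P j →
      (Finset.univ.filter (fun i => P i j = 0)).card ≤ k - 1 := by
  intro j hj
  by_contra hcon
  push_neg at hcon
  set Z := Finset.univ.filter (fun i => P i j = 0) with hZdef
  have hZk : k ≤ Z.card := by omega
  set S := Finset.univ.filter (fun i => ¬ P i j = 0) with hSdef
  have hcards : Z.card + S.card = N := by
    rw [hZdef, hSdef, Finset.card_filter_add_card_filter_not]
    simp
  have hScard : S.card ≤ N - k := by omega
  set s := ∑ i ∈ Finset.univ.filter (fun i : Fin N => (i : ℕ) < N - k), p i with hsdef
  have hNk : 0 < N - k := by omega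
  have hs0 : 0 < s := by
    apply Finset.sum_pos
    · intro i _; exact hp i
    · exact ⟨⟨0, hN⟩, by simp [hNk]⟩
  set M := ⨆ i, P i j with hMdef
  have hMle : ∀ i, P i j ≤ M := by
    intro i
    rw [hMdef]
    exact le_ciSup (Set.Finite.bddAbove (Set.finite_range fun i => P i j)) i
  have hM0 : 0 < M := by
    by_contra hM
    push_neg at hM
    have : outDist p P j = 0 := by
      unfold outDist
      apply Finset.sum_eq_zero
      intro i _
      have := le_antisymm (le_trans (hMle i) hM) (hP.1 i j)
      rw [this]; ring
    linarith
  have hPY : outDist p P j ≤ M * s := by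
    have e1 : outDist p P j = ∑ i ∈ S, p i * P i j := by
      unfold outDist
      symm
      apply Finset.sum_subset (Finset.subset_univ S)
      intro i _ hi
      have h0 : P i j = 0 := by
        by_contra h0
        exact hi (by simp [hSdef, h0])
      rw [h0]; ring
    have e2 : ∑ i ∈ S, p i * P i j ≤ ∑ i ∈ S, p i * M := by
      apply Finset.sum_le_sum
      intro i _
      exact mul_le_mul_of_nonneg_left (hMle i) (hp i).le
    have e3 : ∑ i ∈ S, p i * M = M * ∑ i ∈ S, p i := by
      rw [Finset.mul_sum]; apply Finset.sum_congr rfl; intro i _; ring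
    have e4 : ∑ i ∈ S, p i ≤ s :=
      sum_subset_le_top p (fun i => (hp i).le) hord S (N - k) hScard
    calc outDist p P j = ∑ i ∈ S, p i * P i j := e1
      _ ≤ ∑ i ∈ S, p i * M := e2
      _ = M * ∑ i ∈ S, p i := e3
      _ ≤ M * s := by nlinarith
  have hdiv : 1 / s ≤ M / outDist p P j := by
    have h1 : M / (M * s) ≤ M / outDist p P j :=
      div_le_div_of_nonneg_left hM0.le hj hPY
    have h2 : M / (M * s) = 1 / s := by
      field_simp
    linarith
  have hlog : Real.log (1 / s) ≤ pml p P j := by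
    unfold pml
    exact Real.log_le_log (by positivity) hdiv
  have hlogs : Real.log (1 / s) = -Real.log s := by
    rw [one_div, Real.log_inv]
  have := hPML j hj
  linarith [hεk, hlog, hlogs ▸ hlog]
end

section
/- Let p be a full-support prior on {x_1,…,x_N} ordered so that p_1 ≥ p_2 ≥ … ≥ p_N > 0, let P be an N×M privacy mechanism, and let j be a column with P_Y(j) > 0. Let S = {i : P(i,j) > 0} and l = |S|. Then the pointwise maximal leakage satisfies ℓ(X→y_j) ≥ −log(∑_{i∈S} p_i) ≥ −log(∑_{i=1}^{l} p_i), i.e., the leakage to y_j is at least minus the log of the total prior probability of the support of column j, which is in turn at least minus the log of the sum of the l largest prior probabilities. -/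
lemma strictMono_val_le_aux {l N : ℕ} (f : Fin l → Fin N) (hf : StrictMono f) :
    ∀ n (k : Fin l), (k : ℕ) = n → n ≤ (f k : ℕ) := by
  intro n
  induction n with
  | zero => intro k _; exact Nat.zero_le _
  | succ n ih =>
    intro k hk
    have hn : n < l := by omega
    have hlt : (⟨n, hn⟩ : Fin l) < k := by simp [Fin.lt_def, hk]
    have h2 : (f ⟨n, hn⟩ : ℕ) < (f k : ℕ) := hf hlt
    have h1 := ih ⟨n, hn⟩ rfl
    omega


open scoped BigOperators Classical

/-- **Leakage lower bound from column support.** With the prior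
ordered non-increasingly, the leakage to an output `j` is at least
`−log(∑_{i ∈ S} p_i)` where `S` is the support of column `j`, which in turn is
at least `−log(∑_{i=1}^{l} p_i)` with `l = |S|`. -/
theorem pml_lower_bound_support (N M : ℕ) (hN : 1 ≤ N) (p : Fin N → ℝ)
    (hp : ∀ i, 0 < p i) (hpsum : ∑ i, p i = 1)
    (hord : ∀ i j : Fin N, i ≤ j → p j ≤ p i)
    (P : Matrix (Fin N) (Fin M) ℝ) (hP : IsMechanism P)
    (j : Fin M) (hj : 0 < outDist p P j) :
    -Real.log (∑ i ∈ Finset.univ.filter (fun i => 0 < P i j), p i) ≤ pml p P j ∧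
    -Real.log (∑ i ∈ Finset.univ.filter
        (fun i : Fin N => (i : ℕ) < (Finset.univ.filter (fun i => 0 < P i j)).card), p i)
      ≤ -Real.log (∑ i ∈ Finset.univ.filter (fun i => 0 < P i j), p i) := by
  classical
  set S : Finset (Fin N) := Finset.univ.filter (fun i => 0 < P i j) with hS
  -- S is nonempty
  have hSne : S.Nonempty := by
    by_contra h
    rw [Finset.not_nonempty_iff_eq_empty] at h
    have : outDist p P j = 0 := by
      unfold outDist
      apply Finset.sum_eq_zero
      intro i _
      have hi : i ∉ S := by simp [h]
      have : ¬ 0 < P i j := by simpa [hS] using hi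
      have : P i j = 0 := le_antisymm (not_lt.1 this) (hP.1 i j)
      simp [this]
    linarith
  obtain ⟨i₀, hi₀⟩ := hSne
  have hi₀pos : 0 < P i₀ j := by simpa [hS] using hi₀
  have hbdd : BddAbove (Set.range fun i => P i j) := (Set.finite_range _).bddAbove
  have hsup_pos : 0 < ⨆ i, P i j := lt_of_lt_of_le hi₀pos (le_ciSup hbdd i₀)
  have hs_pos : 0 < ∑ i ∈ S, p i :=
    Finset.sum_pos (fun i _ => hp i) ⟨i₀, hi₀⟩
  -- key bound: outDist ≤ sup * ∑_{S} p
  have hkey : outDist p P j ≤ (⨆ i, P i j) * ∑ i ∈ S, p i := by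
    have h1 : outDist p P j = ∑ i ∈ S, p i * P i j := by
      unfold outDist
      rw [← Finset.sum_filter_add_sum_filter_not Finset.univ (fun i => 0 < P i j)
        (fun i => p i * P i j)]
      have : ∑ i ∈ Finset.univ.filter (fun i => ¬ 0 < P i j), p i * P i j = 0 := by
        apply Finset.sum_eq_zero
        intro i hi
        have : ¬ 0 < P i j := (Finset.mem_filter.1 hi).2
        have : P i j = 0 := le_antisymm (not_lt.1 this) (hP.1 i j)
        simp [this]
      rw [this, add_zero]
    rw [h1, Finset.mul_sum]
    apply Finset.sum_le_sum
    intro i _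
    rw [mul_comm ((⨆ i, P i j)) (p i)]
    exact mul_le_mul_of_nonneg_left (le_ciSup hbdd i) (hp i).le
  constructor
  · -- first inequality
    have hlog : Real.log (outDist p P j) ≤
        Real.log (⨆ i, P i j) + Real.log (∑ i ∈ S, p i) := by
      calc Real.log (outDist p P j) ≤ Real.log ((⨆ i, P i j) * ∑ i ∈ S, p i) :=
            Real.log_le_log hj hkey
        _ = _ := Real.log_mul hsup_pos.ne' hs_pos.ne'
    have hpml : pml p P j = Real.log (⨆ i, P i j) - Real.log (outDist p P j) := by
      unfold pml
      exact Real.log_div hsup_pos.ne' hj.ne'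
    rw [hpml]
    linarith
  · -- second inequality: sum over S ≤ sum of the |S| largest
    set l := S.card with hl
    have hlN : l ≤ N := by
      simpa using Finset.card_le_card (Finset.subset_univ S)
    set T : Finset (Fin N) := Finset.univ.filter (fun i : Fin N => (i : ℕ) < l) with hT
    have hsum_le : ∑ i ∈ S, p i ≤ ∑ i ∈ T, p i := by
      have hf := S.orderEmbOfFin (rfl : S.card = l)
      -- rewrite the S-sum over Fin l
      have hSmap : S = Finset.univ.map (S.orderEmbOfFin rfl).toEmbedding := by
        ext a
        simp only [Finset.mem_map, Finset.mem_univ, true_and,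
          RelEmbedding.coe_toEmbedding]
        constructor
        · intro h
          have ha : a ∈ Set.range ⇑(S.orderEmbOfFin rfl) := by
            rw [Finset.range_orderEmbOfFin]; exact h
          obtain ⟨k, hk⟩ := ha
          exact ⟨k, hk⟩
        · rintro ⟨k, rfl⟩
          exact S.orderEmbOfFin_mem rfl k
      have hSsum : ∑ i ∈ S, p i = ∑ k : Fin l, p (S.orderEmbOfFin rfl k) := by
        conv_lhs => rw [hSmap]
        rw [Finset.sum_map]
        rfl
      have hTeq : T = Finset.univ.map ⟨Fin.castLE hlN, Fin.castLE_injective hlN⟩ := by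
        ext i
        simp only [hT, Finset.mem_filter, Finset.mem_univ, true_and, Finset.mem_map,
          Function.Embedding.coeFn_mk]
        constructor
        · intro h
          exact ⟨⟨(i : ℕ), h⟩, rfl⟩
        · rintro ⟨k, rfl⟩
          exact k.2
      have hTsum : ∑ i ∈ T, p i = ∑ k : Fin l, p (Fin.castLE hlN k) := by
        rw [hTeq, Finset.sum_map]
        rfl
      rw [hSsum, hTsum]
      apply Finset.sum_le_sum
      intro k _
      apply hord
      have := strictMono_val_le_aux (fun k => S.orderEmbOfFin rfl k)
        (S.orderEmbOfFin rfl).strictMono (k : ℕ) k rfl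
      exact Fin.le_def.2 (by simpa using this)
    have hT_pos : 0 < ∑ i ∈ T, p i := lt_of_lt_of_le hs_pos hsum_le
    exact neg_le_neg (Real.log_le_log hs_pos hsum_le)
end

section
/- Let N ≥ 2, let p be a full-support prior on {x_1,…,x_N} ordered so that p_1 ≥ … ≥ p_N > 0, and suppose 0 ≤ ε < ε_1(p) := −log(1 − p_N) (the high-privacy regime). Define the N×N mechanism P* by P*(i,i) = 1 − e^ε(1 − p_i) and P*(i,j) = e^ε p_j for i ≠ j. Then P* is a valid privacy mechanism satisfying ε-PML, and for every sublinear μ : [0,∞)^N → [0,∞), P* maximizes the associated sub-convex utility U over M_N(ε), i.e., U(P*) ≥ U(Q) for every Q ∈ M_N(ε). -/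
open scoped BigOperators Classical

/-- The high-privacy mechanism of Theorem 4:
`P*(i,i) = 1 − e^ε(1 − p_i)` and `P*(i,j) = e^ε p_j` for `i ≠ j`. -/
noncomputable def highPrivMech (N : ℕ) (p : Fin N → ℝ) (ε : ℝ) :
    Matrix (Fin N) (Fin N) ℝ :=
  Matrix.of fun i j => if i = j then 1 - Real.exp ε * (1 - p i) else Real.exp ε * p j


lemma sublinear_mu_zero {N : ℕ} {μ : (Fin N → ℝ) → ℝ} (hμ : Sublinear μ) : μ 0 = 0 := by
  have h := hμ.2.1 0 le_rfl 0 (fun i => le_rfl)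
  simpa using h

lemma sublinear_sum {N : ℕ} {μ : (Fin N → ℝ) → ℝ} (hμ : Sublinear μ)
    {ι : Type*} (s : Finset ι) (f : ι → Fin N → ℝ) (hf : ∀ a i, 0 ≤ f a i) :
    μ (∑ a ∈ s, f a) ≤ ∑ a ∈ s, μ (f a) := by
  classical
  induction s using Finset.cons_induction with
  | empty => simp [sublinear_mu_zero hμ]
  | cons a s ha ih =>
    rw [Finset.sum_cons, Finset.sum_cons]
    have hnn : ∀ i, 0 ≤ (∑ b ∈ s, f b) i := by
      intro i
      rw [Finset.sum_apply]
      exact Finset.sum_nonneg fun b _ => hf b i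
    exact le_trans (hμ.2.2 _ _ (hf a) hnn) (by linarith)

/-- **Optimal mechanism in the high-privacy regime.** For an
ordered full-support prior and `0 ≤ ε < ε_1(p) = −log(1 − p_N)`, the mechanism
`highPrivMech` is valid, satisfies `ε`-PML, and maximizes every sub-convex
utility over `M_N(ε)`. -/
theorem high_privacy_mech_optimal (N : ℕ) (hN : 2 ≤ N) (p : Fin N → ℝ)
    (hp : ∀ i, 0 < p i) (hpsum : ∑ i, p i = 1)
    (hord : ∀ i j : Fin N, i ≤ j → p j ≤ p i)
    (ε : ℝ) (hε0 : 0 ≤ ε)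
    (hε1 : ε < -Real.log (1 - p ⟨N - 1, by omega⟩)) :
    IsMechanism (highPrivMech N p ε) ∧
    SatisfiesPML p ε (highPrivMech N p ε) ∧
    ∀ μ : (Fin N → ℝ) → ℝ, Sublinear μ →
      ∀ Q : Matrix (Fin N) (Fin N) ℝ, IsMechanism Q → SatisfiesPML p ε Q →
        utility μ Q ≤ utility μ (highPrivMech N p ε) := by
  classical
  haveI hne : Nonempty (Fin N) := ⟨⟨0, by omega⟩⟩
  have hE0 : (0:ℝ) < Real.exp ε := Real.exp_pos ε
  have hE1 : (1:ℝ) ≤ Real.exp ε := Real.one_le_exp hε0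
  set iN : Fin N := ⟨N - 1, by omega⟩ with hiN
  have hpmin : ∀ i, p iN ≤ p i := by
    intro i
    refine hord i iN ?_
    simp only [hiN, Fin.le_def]
    omega
  have hp1 : ∀ i, p i ≤ 1 := by
    intro i
    rw [← hpsum]
    exact Finset.single_le_sum (fun k _ => (hp k).le) (Finset.mem_univ i)
  have hi0 : (⟨0, by omega⟩ : Fin N) ≠ iN := by
    simp only [hiN, Fin.ne_iff_vne]
    omega
  have hpNlt : p iN < 1 := by
    have hsub : p ⟨0, by omega⟩ + p iN ≤ 1 := by
      rw [← hpsum, ← Finset.sum_pair hi0]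
      exact Finset.sum_le_sum_of_subset_of_nonneg (Finset.subset_univ _)
        (fun k _ _ => (hp k).le)
    linarith [hp ⟨0, by omega⟩]
  have h1pN : (0:ℝ) < 1 - p iN := by linarith
  have hEub : Real.exp ε * (1 - p iN) < 1 := by
    have h2 : ε < Real.log (1 - p iN)⁻¹ := by rwa [Real.log_inv]
    have h3 : Real.exp ε < (1 - p iN)⁻¹ := by
      have h4 := Real.exp_lt_exp.mpr h2
      rwa [Real.exp_log (inv_pos.mpr h1pN)] at h4
    calc Real.exp ε * (1 - p iN) < (1 - p iN)⁻¹ * (1 - p iN) :=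
          mul_lt_mul_of_pos_right h3 h1pN
      _ = 1 := inv_mul_cancel₀ h1pN.ne'
  have hdiag : ∀ i, 0 ≤ 1 - Real.exp ε * (1 - p i) := by
    intro i
    have h5 : Real.exp ε * (1 - p i) ≤ Real.exp ε * (1 - p iN) :=
      mul_le_mul_of_nonneg_left (by linarith [hpmin i]) hE0.le
    linarith
  have hPdiag : ∀ i, highPrivMech N p ε i i = 1 - Real.exp ε * (1 - p i) := by
    intro i; simp [highPrivMech]
  have hPnn : ∀ i j, 0 ≤ highPrivMech N p ε i j := by
    intro i j
    simp only [highPrivMech, Matrix.of_apply]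
    split
    · exact hdiag i
    · exact mul_nonneg hE0.le (hp j).le
  have herase : ∀ i : Fin N, ∑ j ∈ Finset.univ.erase i, p j = 1 - p i := by
    intro i
    have h6 := Finset.sum_erase_add Finset.univ p (Finset.mem_univ i)
    rw [hpsum] at h6
    linarith
  have hrow : ∀ i, ∑ j, highPrivMech N p ε i j = 1 := by
    intro i
    rw [← Finset.sum_erase_add _ _ (Finset.mem_univ i)]
    have h1 : ∑ j ∈ Finset.univ.erase i, highPrivMech N p ε i j
        = ∑ j ∈ Finset.univ.erase i, Real.exp ε * p j := by
      refine Finset.sum_congr rfl fun j hj => ?_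
      have hij : i ≠ j := (Finset.ne_of_mem_erase hj).symm
      simp [highPrivMech, hij]
    rw [h1, ← Finset.mul_sum, herase i, hPdiag i]
    ring
  have hmech : IsMechanism (highPrivMech N p ε) := ⟨hPnn, hrow⟩
  have hout : ∀ j, outDist p (highPrivMech N p ε) j = p j := by
    intro j
    unfold outDist
    rw [← Finset.sum_erase_add _ _ (Finset.mem_univ j)]
    have h1 : ∑ i ∈ Finset.univ.erase j, p i * highPrivMech N p ε i j
        = ∑ i ∈ Finset.univ.erase j, p i * (Real.exp ε * p j) := by
      refine Finset.sum_congr rfl fun i hi => ?_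
      have hij : i ≠ j := Finset.ne_of_mem_erase hi
      simp [highPrivMech, hij]
    rw [h1, ← Finset.sum_mul, herase j, hPdiag j]
    ring
  have hsup : ∀ j, (⨆ i, highPrivMech N p ε i j) = Real.exp ε * p j := by
    intro j
    apply le_antisymm
    · apply ciSup_le
      intro i
      by_cases h : i = j
      · subst h
        rw [hPdiag i]
        nlinarith [hp i, hp1 i]
      · simp [highPrivMech, h]
    · obtain ⟨i, hij⟩ : ∃ i : Fin N, i ≠ j := by
        by_cases h : j = ⟨0, by omega⟩
        · refine ⟨⟨1, by omega⟩, ?_⟩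
          simp only [h, Fin.ne_iff_vne]
          omega
        · exact ⟨⟨0, by omega⟩, Ne.symm h⟩
      have hv : highPrivMech N p ε i j = Real.exp ε * p j := by
        simp [highPrivMech, hij]
      rw [← hv]
      exact le_ciSup (f := fun i => highPrivMech N p ε i j)
        (Set.Finite.bddAbove (Set.finite_range _)) i
  have hpml : SatisfiesPML p ε (highPrivMech N p ε) := by
    intro j _
    unfold pml
    rw [hsup j, hout j, mul_div_assoc, div_self (hp j).ne', mul_one, Real.log_exp]
  refine ⟨hmech, hpml, ?_⟩
  intro μ hμ Q hQm hQp
  have hsQ : ∀ j, 0 ≤ outDist p Q j := fun j =>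
    Finset.sum_nonneg fun i _ => mul_nonneg (hp i).le (hQm.1 i j)
  have hQkey : ∀ i j, Q i j ≤ Real.exp ε * outDist p Q j := by
    intro i j
    rcases eq_or_lt_of_le (hsQ j) with h0 | h0
    · have hz := (Finset.sum_eq_zero_iff_of_nonneg
        (fun k (_ : k ∈ Finset.univ) => mul_nonneg (hp k).le (hQm.1 k j))).mp h0.symm
      have h7 : p i * Q i j = 0 := hz i (Finset.mem_univ i)
      have hq0 : Q i j = 0 := by
        rcases mul_eq_zero.mp h7 with h | h
        · exact absurd h (hp i).ne'
        · exact h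
      rw [hq0, ← h0, mul_zero]
    · have hb : BddAbove (Set.range fun k => Q k j) := Set.Finite.bddAbove (Set.finite_range _)
      have hle : ∀ k, Q k j ≤ ⨆ k, Q k j := fun k => le_ciSup hb k
      have hout_le : outDist p Q j ≤ ⨆ k, Q k j := by
        calc outDist p Q j = ∑ k, p k * Q k j := rfl
          _ ≤ ∑ k, p k * (⨆ k, Q k j) :=
            Finset.sum_le_sum fun k _ => mul_le_mul_of_nonneg_left (hle k) (hp k).le
          _ = (⨆ k, Q k j) := by rw [← Finset.sum_mul, hpsum, one_mul]
      have hpml' := hQp j h0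
      unfold pml at hpml'
      have hpos : 0 < (⨆ k, Q k j) / outDist p Q j :=
        div_pos (lt_of_lt_of_le h0 hout_le) h0
      have hexp := Real.exp_le_exp.mpr hpml'
      rw [Real.exp_log hpos] at hexp
      rw [div_le_iff₀ h0] at hexp
      exact le_trans (hle i) hexp
  have hsQsum : ∑ j, outDist p Q j = 1 := by
    unfold outDist
    rw [Finset.sum_comm]
    have h8 : ∀ i : Fin N, ∑ j, p i * Q i j = p i := by
      intro i
      rw [← Finset.mul_sum, hQm.2 i, mul_one]
    rw [Finset.sum_congr rfl fun i _ => h8 i, hpsum]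
  have hc : ∃ c : Fin N → Fin N → ℝ,
      (∀ a j, 0 ≤ c a j) ∧
      (∀ a i, Q i a = ∑ j, c a j * highPrivMech N p ε i j) ∧
      (∀ j, ∑ a, c a j = 1) := by
    rcases eq_or_lt_of_le hE1 with hE | hE
    · -- ε = 0 case: Real.exp ε = 1
      have hQeq : ∀ i a, Q i a = outDist p Q a := by
        intro i a
        have hnn : ∀ k ∈ Finset.univ, (0:ℝ) ≤ p k * (outDist p Q a - Q k a) := by
          intro k _
          have h9 := hQkey k a
          rw [← hE, one_mul] at h9
          exact mul_nonneg (hp k).le (by linarith)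
        have hz : ∑ k, p k * (outDist p Q a - Q k a) = 0 := by
          simp only [mul_sub]
          rw [Finset.sum_sub_distrib, ← Finset.sum_mul, hpsum, one_mul]
          simp [outDist]
        have h10 := (Finset.sum_eq_zero_iff_of_nonneg hnn).mp hz i (Finset.mem_univ i)
        rcases mul_eq_zero.mp h10 with h | h
        · exact absurd h (hp i).ne'
        · linarith
      refine ⟨fun a _ => outDist p Q a, fun a j => hsQ a, ?_, fun j => hsQsum⟩
      intro a i
      show Q i a = ∑ j, outDist p Q a * highPrivMech N p ε i j
      rw [hQeq i a, ← Finset.mul_sum, hrow i, mul_one]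
    · -- ε > 0 case
      have hE1' : (0:ℝ) < Real.exp ε - 1 := by linarith
      refine ⟨fun a j => (Real.exp ε * outDist p Q a - Q j a) / (Real.exp ε - 1), ?_, ?_, ?_⟩
      · intro a j
        exact div_nonneg (by linarith [hQkey j a]) hE1'.le
      · intro a i
        set s := outDist p Q a with hs
        have hcp : ∑ j, (Real.exp ε * s - Q j a) / (Real.exp ε - 1) * p j = s := by
          have h2 : ∑ j, (Real.exp ε * s - Q j a) * p j = (Real.exp ε - 1) * s := by
            simp only [sub_mul]
            rw [Finset.sum_sub_distrib]
            have e1 : ∑ j, Real.exp ε * s * p j = Real.exp ε * s := by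
              rw [← Finset.mul_sum, hpsum, mul_one]
            have e2 : ∑ j, Q j a * p j = s := by
              rw [hs]
              unfold outDist
              exact Finset.sum_congr rfl fun j _ => mul_comm _ _
            rw [e1, e2]; ring
          calc ∑ j, (Real.exp ε * s - Q j a) / (Real.exp ε - 1) * p j
              = (∑ j, (Real.exp ε * s - Q j a) * p j) / (Real.exp ε - 1) := by
                rw [Finset.sum_div]
                exact Finset.sum_congr rfl fun j _ => by rw [div_mul_eq_mul_div]
            _ = s := by
                rw [h2, mul_comm, mul_div_assoc, div_self hE1'.ne', mul_one]
        have hsplit : ∀ j, (Real.exp ε * s - Q j a) / (Real.exp ε - 1) * highPrivMech N p ε i j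
            = (Real.exp ε * s - Q j a) / (Real.exp ε - 1) * (Real.exp ε * p j)
              + (if j = i then (Real.exp ε * s - Q i a) / (Real.exp ε - 1) * (1 - Real.exp ε)
                 else 0) := by
          intro j
          rcases eq_or_ne i j with h | h
          · subst h
            rw [hPdiag i, if_pos rfl]
            ring
          · simp only [highPrivMech, Matrix.of_apply, if_neg h, if_neg (Ne.symm h)]
            ring
        have hrhs : ∑ j, (Real.exp ε * s - Q j a) / (Real.exp ε - 1) * highPrivMech N p ε i j
            = Q i a := by
          calc ∑ j, (Real.exp ε * s - Q j a) / (Real.exp ε - 1) * highPrivMech N p ε i j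
              = ∑ j, ((Real.exp ε * s - Q j a) / (Real.exp ε - 1) * (Real.exp ε * p j)
                + (if j = i then (Real.exp ε * s - Q i a) / (Real.exp ε - 1) * (1 - Real.exp ε)
                   else 0)) := Finset.sum_congr rfl fun j _ => hsplit j
            _ = Real.exp ε * (∑ j, (Real.exp ε * s - Q j a) / (Real.exp ε - 1) * p j)
                + (Real.exp ε * s - Q i a) / (Real.exp ε - 1) * (1 - Real.exp ε) := by
                rw [Finset.sum_add_distrib, Finset.sum_ite_eq' Finset.univ i
                  (fun _ => (Real.exp ε * s - Q i a) / (Real.exp ε - 1) * (1 - Real.exp ε))]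
                simp only [Finset.mem_univ, if_pos]
                congr 1
                rw [Finset.mul_sum]
                exact Finset.sum_congr rfl fun j _ => by ring
            _ = Q i a := by
                rw [hcp]
                field_simp
                ring
        exact hrhs.symm
      · intro j
        show ∑ a, (Real.exp ε * outDist p Q a - Q j a) / (Real.exp ε - 1) = 1
        rw [← Finset.sum_div, Finset.sum_sub_distrib, ← Finset.mul_sum, hsQsum, hQm.2 j,
          mul_one]
        exact div_self hE1'.ne'
  obtain ⟨c, hc0, hcrec, hcsum⟩ := hc
  have hcol : ∀ a : Fin N,
      μ (fun i => Q i a) ≤ ∑ j, c a j * μ (fun i => highPrivMech N p ε i j) := by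
    intro a
    have hfun : (fun i => Q i a) = ∑ j, c a j • (fun i => highPrivMech N p ε i j) := by
      funext i
      rw [Finset.sum_apply]
      simp only [Pi.smul_apply, smul_eq_mul]
      exact hcrec a i
    rw [hfun]
    refine le_trans (sublinear_sum hμ Finset.univ _ ?_) (le_of_eq ?_)
    · intro j i
      simp only [Pi.smul_apply, smul_eq_mul]
      exact mul_nonneg (hc0 a j) (hPnn i j)
    · exact Finset.sum_congr rfl fun j _ =>
        hμ.2.1 (c a j) (hc0 a j) _ (fun i => hPnn i j)
  calc utility μ Q = ∑ a, μ (fun i => Q i a) := rfl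
    _ ≤ ∑ a, ∑ j, c a j * μ (fun i => highPrivMech N p ε i j) :=
        Finset.sum_le_sum fun a _ => hcol a
    _ = ∑ j, (∑ a, c a j) * μ (fun i => highPrivMech N p ε i j) := by
        rw [Finset.sum_comm]
        exact Finset.sum_congr rfl fun j _ => (Finset.sum_mul _ _ _).symm
    _ = utility μ (highPrivMech N p ε) := by
        unfold utility
        exact Finset.sum_congr rfl fun j _ => by rw [hcsum j, one_mul]
end

section
/- Let N ≥ 2, let p be the uniform prior on {x_1,…,x_N} (p_i = 1/N for all i), let k ∈ {1,…,N−1}, and suppose ε_{k−1}(p) ≤ ε < ε_k(p), where ε_j(p) = −log((N−j)/N). Define the N×N mechanism P* by: P*(i,j) = e^ε/N if (i − j) mod N ∈ {1,…,N−k}; P*(j,j) = 1 − e^ε(N−k)/N; and P*(i,j) = 0 otherwise (so each column has exactly N−k entries equal to e^ε/N, one entry equal to 1 − e^ε(N−k)/N, and k−1 zeros, arranged cyclically). Then P* is a valid privacy mechanism satisfying ε-PML, and for every sublinear permutation-symmetric μ : [0,∞)^N → [0,∞), P* maximizes the associated sub-convex utility U over M_N(ε), i.e., U(P*) ≥ U(Q)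 for every Q ∈ M_N(ε). -/
open scoped BigOperators Classical

/-- `μ` is permutation-symmetric. -/
def PermSymmetric {N : ℕ} (μ : (Fin N → ℝ) → ℝ) : Prop :=
  ∀ σ : Equiv.Perm (Fin N), ∀ x : Fin N → ℝ, μ (x ∘ σ) = μ x

/-- The cyclic mechanism of Theorem 5 for uniform priors: in column `j`, the
entries with `(i − j) mod N ∈ {1,…,N−k}` equal `e^ε/N`, the diagonal entry
equals `1 − e^ε(N−k)/N`, and the remaining `k−1` entries are zero. -/
noncomputable def cyclicMech (N k : ℕ) (ε : ℝ) : Matrix (Fin N) (Fin N) ℝ :=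
  Matrix.of fun i j =>
    if 1 ≤ ((i : ℕ) + N - (j : ℕ)) % N ∧ ((i : ℕ) + N - (j : ℕ)) % N ≤ N - k then
      Real.exp ε / N
    else if i = j then 1 - Real.exp ε * ((N - k : ℕ) : ℝ) / N
    else 0

lemma exists_perm_of_fiber_card {α : Type*} [Fintype α] (f g : α → ℝ)
    (h : ∀ c : ℝ, (Finset.univ.filter (fun i => f i = c)).card
      = (Finset.univ.filter (fun i => g i = c)).card) :
    ∃ σ : Equiv.Perm α, f = g ∘ σ := by
  have h' : ∀ c : ℝ, Fintype.card {i // f i = c} = Fintype.card {i // g i = c} := by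
    intro c
    rw [Fintype.card_subtype, Fintype.card_subtype]
    exact h c
  have e : ∀ c : ℝ, {i // f i = c} ≃ {i // g i = c} := fun c => Fintype.equivOfCardEq (h' c)
  refine ⟨((Equiv.sigmaFiberEquiv f).symm.trans ((Equiv.sigmaCongrRight e).trans
    (Equiv.sigmaFiberEquiv g))), ?_⟩
  funext i
  simp only [Function.comp_apply, Equiv.trans_apply, Equiv.sigmaCongrRight_apply]
  have : (Equiv.sigmaFiberEquiv f).symm i = ⟨f i, ⟨i, rfl⟩⟩ := rfl
  rw [this]
  exact ((e (f i)) ⟨i, rfl⟩).2.symm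

lemma sum_update_update {N : ℕ} (y : Fin N → ℝ) {i j : Fin N} (hij : i ≠ j) (p q : ℝ) :
    ∑ m, Function.update (Function.update y i p) j q m
      = (∑ m, y m) + (p - y i) + (q - y j) := by
  classical
  rw [Finset.sum_update_of_mem (Finset.mem_univ j), Finset.sdiff_singleton_eq_erase,
    Finset.sum_update_of_mem (Finset.mem_erase.2 ⟨hij, Finset.mem_univ i⟩),
    Finset.sdiff_singleton_eq_erase]
  have h1 : ∑ m, y m = y j + ∑ m ∈ Finset.univ.erase j, y m :=
    (Finset.add_sum_erase _ _ (Finset.mem_univ j)).symm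
  have h2 : ∑ m ∈ Finset.univ.erase j, y m
      = y i + ∑ m ∈ (Finset.univ.erase j).erase i, y m :=
    (Finset.add_sum_erase _ _ (Finset.mem_erase.2 ⟨hij, Finset.mem_univ i⟩)).symm
  rw [h1, h2]; ring

noncomputable def vv (N k : ℕ) (a b : ℝ) : Fin N → ℝ := fun d =>
  if 1 ≤ (d : ℕ) ∧ (d : ℕ) ≤ N - k then a else if (d : ℕ) = 0 then b else 0

lemma card_A (N k : ℕ) (hN : 2 ≤ N) (hk1 : 1 ≤ k) (hk2 : k ≤ N - 1) :
    (Finset.univ.filter (fun d : Fin N => 1 ≤ (d:ℕ) ∧ (d:ℕ) ≤ N - k)).card = N - k := by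
  have h : Finset.univ.filter (fun d : Fin N => 1 ≤ (d:ℕ) ∧ (d:ℕ) ≤ N - k)
      = Finset.Icc ⟨1, by omega⟩ ⟨N-k, by omega⟩ := by
    ext d
    simp only [Finset.mem_filter, Finset.mem_univ, true_and, Finset.mem_Icc, Fin.le_def]
  rw [h, Fin.card_Icc]; simp

lemma card_B (N k : ℕ) (hN : 2 ≤ N) (hk1 : 1 ≤ k) (hk2 : k ≤ N - 1) :
    (Finset.univ.filter (fun d : Fin N => (d:ℕ) ≤ N - k)).card = N - k + 1 := by
  have h : Finset.univ.filter (fun d : Fin N => (d:ℕ) ≤ N - k)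
      = Finset.Iic ⟨N-k, by omega⟩ := by
    ext d
    simp only [Finset.mem_filter, Finset.mem_univ, true_and, Finset.mem_Iic, Fin.le_def]
  rw [h, Fin.card_Iic]

lemma card_C (N k : ℕ) (hN : 2 ≤ N) :
    (Finset.univ.filter (fun d : Fin N => (d:ℕ) = 0)).card = 1 := by
  have h : Finset.univ.filter (fun d : Fin N => (d:ℕ) = 0) = {(⟨0, by omega⟩ : Fin N)} := by
    ext d
    simp only [Finset.mem_filter, Finset.mem_univ, true_and, Finset.mem_singleton, Fin.ext_iff]
  rw [h, Finset.card_singleton]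

lemma card_D (N k : ℕ) (hN : 2 ≤ N) (hk1 : 1 ≤ k) (hk2 : k ≤ N - 1) :
    (Finset.univ.filter (fun d : Fin N => (1 ≤ (d:ℕ) ∧ (d:ℕ) ≤ N - k) ∨ (d:ℕ) = 0)).card = N - k + 1 := by
  have h : Finset.univ.filter (fun d : Fin N => (1 ≤ (d:ℕ) ∧ (d:ℕ) ≤ N - k) ∨ (d:ℕ) = 0)
      = Finset.Iic ⟨N-k, by omega⟩ := by
    ext d
    simp only [Finset.mem_filter, Finset.mem_univ, true_and, Finset.mem_Iic, Fin.le_def]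
    omega
  rw [h, Fin.card_Iic]

lemma sum_vv (N k : ℕ) (hN : 2 ≤ N) (hk1 : 1 ≤ k) (hk2 : k ≤ N - 1) (a b : ℝ) :
    ∑ d, vv N k a b d = ((N - k : ℕ) : ℝ) * a + b := by
  unfold vv
  rw [Fin.sum_univ_eq_sum_range (fun m => if 1 ≤ m ∧ m ≤ N - k then a else if m = 0 then b else 0)]
  have h : ∀ m ∈ Finset.range N,
      (if 1 ≤ m ∧ m ≤ N - k then a else if m = 0 then b else 0)
        = (if m ∈ Finset.Icc 1 (N-k) then a else 0) + (if m = 0 then b else 0) := by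
    intro m _
    simp only [Finset.mem_Icc]
    split_ifs <;> first | (exfalso; omega) | ring
  rw [Finset.sum_congr rfl h, Finset.sum_add_distrib]
  have h1 : ∑ m ∈ Finset.range N, (if m ∈ Finset.Icc 1 (N-k) then a else 0) = ((N-k:ℕ):ℝ) * a := by
    rw [Finset.sum_ite_mem]
    have h' : Finset.range N ∩ Finset.Icc 1 (N-k) = Finset.Icc 1 (N-k) := by
      apply Finset.inter_eq_right.2
      intro m hm; rw [Finset.mem_range]; have := Finset.mem_Icc.1 hm; omega
    rw [h', Finset.sum_const, Nat.card_Icc, nsmul_eq_mul]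
    norm_num
  have h2 : ∑ m ∈ Finset.range N, (if m = 0 then b else 0) = b := by
    rw [Finset.sum_ite_eq' (Finset.range N) 0 (fun _ => b)]
    rw [if_pos (Finset.mem_range.2 (by omega))]
  rw [h1, h2]

lemma vv_nonneg (N k : ℕ) {a b : ℝ} (ha : 0 ≤ a) (hb : 0 ≤ b) : ∀ d, 0 ≤ vv N k a b d := by
  intro d; unfold vv; split_ifs <;> first | exact ha | exact hb | exact le_refl 0

lemma vv_le (N k : ℕ) {a b : ℝ} (ha : 0 ≤ a) (hba : b ≤ a) : ∀ d, vv N k a b d ≤ a := by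
  intro d; unfold vv; split_ifs <;> first | exact le_refl a | exact hba | exact ha

lemma key_lemma {N k : ℕ} (hN : 2 ≤ N) (hk1 : 1 ≤ k) (hk2 : k ≤ N - 1)
    {a b : ℝ} (ha : 0 < a) (hb : 0 < b) (hba : b ≤ a)
    (hab : ((N - k : ℕ) : ℝ) * a + b = 1)
    (μ : (Fin N → ℝ) → ℝ) (hμ : Sublinear μ) (hsym : PermSymmetric μ) :
    ∀ (t : ℕ) (y : Fin N → ℝ),
      (Finset.univ.filter (fun i => 0 < y i ∧ y i < a)).card = t →
      (∀ i, 0 ≤ y i) → (∀ i, y i ≤ a) → (∑ i, y i) = 1 →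
      μ y ≤ μ (vv N k a b) := by
  intro t
  induction t using Nat.strong_induction_on with
  | _ t ih =>
  intro y hcard hy0 hya hys
  by_cases hsplit : ∃ i j : Fin N, i ≠ j ∧ (0 < y i ∧ y i < a) ∧ (0 < y j ∧ y j < a)
  case pos =>
    obtain ⟨i, j, hij, ⟨hyi0, hyia⟩, hyj0, hyja⟩ := hsplit
    set tp := min (a - y i) (y j) with htpdef
    set tm := min (y i) (a - y j) with htmdef
    have htp0 : 0 < tp := lt_min (by linarith) hyj0
    have htm0 : 0 < tm := lt_min hyi0 (by linarith)
    have htpa1 : tp ≤ a - y i := min_le_left _ _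
    have htpa2 : tp ≤ y j := min_le_right _ _
    have htma1 : tm ≤ y i := min_le_left _ _
    have htma2 : tm ≤ a - y j := min_le_right _ _
    set y1 := Function.update (Function.update y i (y i + tp)) j (y j - tp) with hy1def
    set y2 := Function.update (Function.update y i (y i - tm)) j (y j + tm) with hy2def
    have hy1i : y1 i = y i + tp := by
      rw [hy1def, Function.update_of_ne hij, Function.update_self]
    have hy1j : y1 j = y j - tp := by rw [hy1def, Function.update_self]
    have hy1m : ∀ m, m ≠ i → m ≠ j → y1 m = y m := by
      intro m hmi hmj
      rw [hy1def, Function.update_of_ne hmj, Function.update_of_ne hmi]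
    have hy2i : y2 i = y i - tm := by
      rw [hy2def, Function.update_of_ne hij, Function.update_self]
    have hy2j : y2 j = y j + tm := by rw [hy2def, Function.update_self]
    have hy2m : ∀ m, m ≠ i → m ≠ j → y2 m = y m := by
      intro m hmi hmj
      rw [hy2def, Function.update_of_ne hmj, Function.update_of_ne hmi]
    have hy10 : ∀ m, 0 ≤ y1 m := by
      intro m
      by_cases hmj : m = j
      · subst hmj; rw [hy1j]; linarith
      · by_cases hmi : m = i
        · subst hmi; rw [hy1i]; linarith
        · rw [hy1m m hmi hmj]; exact hy0 m
    have hy1a : ∀ m, y1 m ≤ a := by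
      intro m
      by_cases hmj : m = j
      · subst hmj; rw [hy1j]; linarith [hya m]
      · by_cases hmi : m = i
        · subst hmi; rw [hy1i]; linarith
        · rw [hy1m m hmi hmj]; exact hya m
    have hy1s : (∑ m, y1 m) = 1 := by
      rw [hy1def, sum_update_update y hij, hys]; ring
    have hy20 : ∀ m, 0 ≤ y2 m := by
      intro m
      by_cases hmj : m = j
      · subst hmj; rw [hy2j]; linarith
      · by_cases hmi : m = i
        · subst hmi; rw [hy2i]; linarith
        · rw [hy2m m hmi hmj]; exact hy0 m
    have hy2a : ∀ m, y2 m ≤ a := by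
      intro m
      by_cases hmj : m = j
      · subst hmj; rw [hy2j]; linarith
      · by_cases hmi : m = i
        · subst hmi; rw [hy2i]; linarith [hya m]
        · rw [hy2m m hmi hmj]; exact hya m
    have hy2s : (∑ m, y2 m) = 1 := by
      rw [hy2def, sum_update_update y hij, hys]; ring
    have hiI : i ∈ Finset.univ.filter (fun m => 0 < y m ∧ y m < a) := by
      simp only [Finset.mem_filter, Finset.mem_univ, true_and]; exact ⟨hyi0, hyia⟩
    have hjI : j ∈ Finset.univ.filter (fun m => 0 < y m ∧ y m < a) := by
      simp only [Finset.mem_filter, Finset.mem_univ, true_and]; exact ⟨hyj0, hyja⟩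
    have hsub1 : Finset.univ.filter (fun m => 0 < y1 m ∧ y1 m < a)
        ⊆ Finset.univ.filter (fun m => 0 < y m ∧ y m < a) := by
      intro m hm
      simp only [Finset.mem_filter, Finset.mem_univ, true_and] at hm ⊢
      by_cases hmj : m = j
      · subst hmj; exact ⟨hyj0, hyja⟩
      · by_cases hmi : m = i
        · subst hmi; exact ⟨hyi0, hyia⟩
        · rwa [hy1m m hmi hmj] at hm
    have hsub2 : Finset.univ.filter (fun m => 0 < y2 m ∧ y2 m < a)
        ⊆ Finset.univ.filter (fun m => 0 < y m ∧ y m < a) := by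
      intro m hm
      simp only [Finset.mem_filter, Finset.mem_univ, true_and] at hm ⊢
      by_cases hmj : m = j
      · subst hmj; exact ⟨hyj0, hyja⟩
      · by_cases hmi : m = i
        · subst hmi; exact ⟨hyi0, hyia⟩
        · rwa [hy2m m hmi hmj] at hm
    have hlt1 : (Finset.univ.filter (fun m => 0 < y1 m ∧ y1 m < a)).card < t := by
      rw [← hcard]
      apply Finset.card_lt_card
      rw [Finset.ssubset_iff_of_subset hsub1]
      rcases le_total (a - y i) (y j) with hc | hc
      · refine ⟨i, hiI, ?_⟩
        simp only [Finset.mem_filter, Finset.mem_univ, true_and, not_and, not_lt]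
        intro _
        rw [hy1i, htpdef, min_eq_left hc]; linarith
      · refine ⟨j, hjI, ?_⟩
        simp only [Finset.mem_filter, Finset.mem_univ, true_and, not_and, not_lt]
        intro hcon
        rw [hy1j, htpdef, min_eq_right hc] at hcon; linarith
    have hlt2 : (Finset.univ.filter (fun m => 0 < y2 m ∧ y2 m < a)).card < t := by
      rw [← hcard]
      apply Finset.card_lt_card
      rw [Finset.ssubset_iff_of_subset hsub2]
      rcases le_total (y i) (a - y j) with hc | hc
      · refine ⟨i, hiI, ?_⟩
        simp only [Finset.mem_filter, Finset.mem_univ, true_and, not_and, not_lt]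
        intro hcon
        rw [hy2i, htmdef, min_eq_left hc] at hcon; linarith
      · refine ⟨j, hjI, ?_⟩
        simp only [Finset.mem_filter, Finset.mem_univ, true_and, not_and, not_lt]
        intro _
        rw [hy2j, htmdef, min_eq_right hc]; linarith
    have hb1 : μ y1 ≤ μ (vv N k a b) := ih _ hlt1 y1 rfl hy10 hy1a hy1s
    have hb2 : μ y2 ≤ μ (vv N k a b) := ih _ hlt2 y2 rfl hy20 hy2a hy2s
    have hsumt : (0:ℝ) < tp + tm := by linarith
    set lam := tm / (tp + tm) with hlamdef
    have hlam0 : 0 ≤ lam := div_nonneg htm0.le hsumt.le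
    have hlam1 : lam ≤ 1 := by rw [hlamdef, div_le_one hsumt]; linarith
    have hne : tp + tm ≠ 0 := ne_of_gt hsumt
    have hyeq : y = lam • y1 + (1 - lam) • y2 := by
      funext m
      simp only [Pi.add_apply, Pi.smul_apply, smul_eq_mul]
      by_cases hmj : m = j
      · subst hmj; rw [hy1j, hy2j, hlamdef]; field_simp; ring
      · by_cases hmi : m = i
        · subst hmi; rw [hy1i, hy2i, hlamdef]; field_simp; ring
        · rw [hy1m m hmi hmj, hy2m m hmi hmj]; ring
    obtain ⟨hnn, hhom, hadd⟩ := hμ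
    have hstep : μ y ≤ lam * μ y1 + (1 - lam) * μ y2 := by
      rw [hyeq]
      calc μ (lam • y1 + (1 - lam) • y2)
          ≤ μ (lam • y1) + μ ((1 - lam) • y2) := by
            apply hadd
            · intro m; simp only [Pi.smul_apply, smul_eq_mul]
              exact mul_nonneg hlam0 (hy10 m)
            · intro m; simp only [Pi.smul_apply, smul_eq_mul]
              exact mul_nonneg (by linarith) (hy20 m)
        _ = lam * μ y1 + (1 - lam) * μ y2 := by
            rw [hhom lam hlam0 y1 hy10, hhom (1 - lam) (by linarith) y2 hy20]
    calc μ y ≤ lam * μ y1 + (1 - lam) * μ y2 := hstep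
      _ ≤ lam * μ (vv N k a b) + (1 - lam) * μ (vv N k a b) := by
          apply add_le_add
          · exact mul_le_mul_of_nonneg_left hb1 hlam0
          · exact mul_le_mul_of_nonneg_left hb2 (by linarith)
      _ = μ (vv N k a b) := by ring
  case neg =>
    have huniq : ∀ m n : Fin N, (0 < y m ∧ y m < a) → (0 < y n ∧ y n < a) → m = n := by
      intro m n hm hn
      by_contra hne
      exact hsplit ⟨m, n, hne, hm, hn⟩
    have htri : ∀ m, y m = a ∨ (0 < y m ∧ y m < a) ∨ y m = 0 := by
      intro m
      rcases eq_or_lt_of_le (hya m) with h | h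
      · exact Or.inl h
      · rcases eq_or_lt_of_le (hy0 m) with h0 | h0
        · exact Or.inr (Or.inr h0.symm)
        · exact Or.inr (Or.inl ⟨h0, h⟩)
    set A := Finset.univ.filter (fun m => y m = a) with hAdef
    have hsumA : ∑ m ∈ A, y m = (A.card : ℝ) * a := by
      rw [Finset.sum_congr rfl (fun m hm => (Finset.mem_filter.1 hm).2), Finset.sum_const,
        nsmul_eq_mul]
    have hsplitsum : (A.card : ℝ) * a
        + (∑ m ∈ Finset.univ.filter (fun m => ¬ y m = a), y m) = 1 := by
      rw [← hsumA, hAdef]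
      rw [Finset.sum_filter_add_sum_filter_not Finset.univ _ y]
      exact hys
    by_cases hex : ∃ i0 : Fin N, 0 < y i0 ∧ y i0 < a
    · obtain ⟨i0, hi00, hi0a⟩ := hex
      have hi0A : i0 ∉ A := by
        simp only [hAdef, Finset.mem_filter, Finset.mem_univ, true_and]
        exact ne_of_lt hi0a
      have hrest : ∑ m ∈ Finset.univ.filter (fun m => ¬ y m = a), y m = y i0 := by
        have hi0mem : i0 ∈ Finset.univ.filter (fun m => ¬ y m = a) := by
          simp only [Finset.mem_filter, Finset.mem_univ, true_and]
          exact ne_of_lt hi0a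
        rw [← Finset.add_sum_erase _ y hi0mem]
        have hzero : ∑ m ∈ (Finset.univ.filter (fun m => ¬ y m = a)).erase i0, y m = 0 := by
          apply Finset.sum_eq_zero
          intro m hm
          have hmi0 : m ≠ i0 := (Finset.mem_erase.1 hm).1
          have hmna : ¬ y m = a := (Finset.mem_filter.1 (Finset.mem_erase.1 hm).2).2
          rcases htri m with h | h | h
          · exact absurd h hmna
          · exact absurd (huniq m i0 h ⟨hi00, hi0a⟩) hmi0
          · exact h
        rw [hzero, add_zero]
      have heq : (A.card : ℝ) * a + y i0 = ((N - k : ℕ) : ℝ) * a + b := by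
        rw [hrest] at hsplitsum
        rw [hsplitsum, hab]
      have hc1 : ¬ (A.card < N - k) := by
        intro hcon
        have hcast : (A.card : ℝ) + 1 ≤ ((N - k : ℕ) : ℝ) := by
          exact_mod_cast Nat.succ_le_of_lt hcon
        nlinarith
      have hc2 : ¬ (N - k < A.card) := by
        intro hcon
        have hcast : ((N - k : ℕ) : ℝ) + 1 ≤ (A.card : ℝ) := by
          exact_mod_cast Nat.succ_le_of_lt hcon
        nlinarith
      have hcardA : A.card = N - k := by omega
      have hyi0b : y i0 = b := by
        rw [hcardA] at heq; linarith
      have hblta : b < a := by rw [← hyi0b]; exact hi0a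
      have hfib : ∀ c : ℝ, (Finset.univ.filter (fun m => y m = c)).card
          = (Finset.univ.filter (fun d => vv N k a b d = c)).card := by
        intro c
        by_cases hc : c = a
        · rw [hc]
          have hvva : ∀ d : Fin N, vv N k a b d = a ↔ (1 ≤ (d:ℕ) ∧ (d:ℕ) ≤ N - k) := by
            intro d; unfold vv; split_ifs with h1 h2
            · exact iff_of_true rfl h1
            · exact iff_of_false (fun h' => (ne_of_lt hblta) h') h1
            · exact iff_of_false (fun h' => (ne_of_gt ha) h'.symm) h1
          have h2 : Finset.univ.filter (fun d => vv N k a b d = a)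
              = Finset.univ.filter (fun d : Fin N => 1 ≤ (d:ℕ) ∧ (d:ℕ) ≤ N - k) := by
            ext d; simp only [Finset.mem_filter, Finset.mem_univ, true_and]; exact hvva d
          rw [← hAdef, h2, card_A N k hN hk1 hk2, hcardA]
        · by_cases hcb : c = b
          · rw [hcb]
            have h1 : Finset.univ.filter (fun m => y m = b) = {i0} := by
              ext m
              simp only [Finset.mem_filter, Finset.mem_univ, true_and, Finset.mem_singleton]
              constructor
              · intro h'
                rcases htri m with h | h | h
                · exact absurd (h'.symm.trans h) (ne_of_lt hblta)
                · exact huniq m i0 h ⟨hi00, hi0a⟩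
                · exact absurd (h'.symm.trans h) (ne_of_gt hb)
              · intro h'; rw [h']; exact hyi0b
            have h2 : Finset.univ.filter (fun d => vv N k a b d = b)
                = Finset.univ.filter (fun d : Fin N => (d:ℕ) = 0) := by
              ext d
              simp only [Finset.mem_filter, Finset.mem_univ, true_and]
              unfold vv; split_ifs with hh1 hh2
              · exact iff_of_false (fun h' => (ne_of_lt hblta) h'.symm) (by omega)
              · exact iff_of_true rfl hh2
              · exact iff_of_false (fun h' => (ne_of_gt hb) h'.symm) hh2
            rw [h1, h2, Finset.card_singleton, card_C N k hN]
          · by_cases hc0 : c = 0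
            · rw [hc0]
              have h1 : Finset.univ.filter (fun m => y m = 0)
                  = Finset.univ.filter (fun m => ¬ (y m = a ∨ m = i0)) := by
                ext m
                simp only [Finset.mem_filter, Finset.mem_univ, true_and, not_or]
                constructor
                · intro h'
                  constructor
                  · intro hcon; exact (ne_of_gt ha) (h'.symm.trans hcon).symm
                  · intro hmi0; rw [hmi0, hyi0b] at h'; exact (ne_of_gt hb) h'
                · rintro ⟨hna, hni⟩
                  rcases htri m with h | h | h
                  · exact absurd h hna
                  · exact absurd (huniq m i0 h ⟨hi00, hi0a⟩) hni
                  · exact h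
              have h2 : Finset.univ.filter (fun d => vv N k a b d = 0)
                  = Finset.univ.filter
                      (fun d : Fin N => ¬ ((1 ≤ (d:ℕ) ∧ (d:ℕ) ≤ N - k) ∨ (d:ℕ) = 0)) := by
                ext d
                simp only [Finset.mem_filter, Finset.mem_univ, true_and]
                unfold vv; split_ifs with hh1 hh2
                · exact iff_of_false (fun h' => (ne_of_gt ha) h')
                    (not_not_intro (Or.inl hh1))
                · exact iff_of_false (fun h' => (ne_of_gt hb) h')
                    (not_not_intro (Or.inr hh2))
                · exact iff_of_true rfl (not_or.2 ⟨hh1, hh2⟩)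
              have hpy : Finset.univ.filter (fun m => y m = a ∨ m = i0) = A ∪ {i0} := by
                ext m
                simp only [hAdef, Finset.mem_union, Finset.mem_filter, Finset.mem_univ,
                  true_and, Finset.mem_singleton]
              have hcard1 : (Finset.univ.filter (fun m => y m = a ∨ m = i0)).card
                  = N - k + 1 := by
                rw [hpy, Finset.card_union_of_disjoint
                  (Finset.disjoint_singleton_right.2 hi0A), hcardA, Finset.card_singleton]
              have e1 := Finset.card_filter_add_card_filter_not
                (s := (Finset.univ : Finset (Fin N))) (p := fun m => y m = a ∨ m = i0)
              have e2 := Finset.card_filter_add_card_filter_not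
                (s := (Finset.univ : Finset (Fin N)))
                (p := fun d : Fin N => (1 ≤ (d:ℕ) ∧ (d:ℕ) ≤ N - k) ∨ (d:ℕ) = 0)
              rw [Finset.card_univ, Fintype.card_fin] at e1 e2
              rw [hcard1] at e1
              rw [card_D N k hN hk1 hk2] at e2
              rw [h1, h2]
              omega
            · have h1 : Finset.univ.filter (fun m => y m = c) = ∅ := by
                rw [Finset.filter_eq_empty_iff]
                intro m _
                rcases htri m with h | h | h
                · rw [h]; exact fun hh => hc hh.symm
                · rw [huniq m i0 h ⟨hi00, hi0a⟩, hyi0b]; exact fun hh => hcb hh.symm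
                · rw [h]; exact fun hh => hc0 hh.symm
              have h2 : Finset.univ.filter (fun d => vv N k a b d = c) = ∅ := by
                rw [Finset.filter_eq_empty_iff]
                intro d _
                unfold vv; split_ifs
                · exact fun hh => hc hh.symm
                · exact fun hh => hcb hh.symm
                · exact fun hh => hc0 hh.symm
              rw [h1, h2]
      obtain ⟨σ, hσ⟩ := exists_perm_of_fiber_card y (vv N k a b) hfib
      rw [hσ]
      exact le_of_eq (hsym σ _)
    · have hz : ∀ m, ¬ y m = a → y m = 0 := by
        intro m hm
        rcases htri m with h | h | h
        · exact absurd h hm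
        · exact absurd ⟨m, h⟩ hex
        · exact h
      have hrest0 : ∑ m ∈ Finset.univ.filter (fun m => ¬ y m = a), y m = 0 :=
        Finset.sum_eq_zero (fun m hm => hz m (Finset.mem_filter.1 hm).2)
      have heq : (A.card : ℝ) * a = ((N - k : ℕ) : ℝ) * a + b := by
        rw [hrest0, add_zero] at hsplitsum
        rw [hsplitsum, hab]
      have hcge : ¬ (A.card ≤ N - k) := by
        intro hcon
        have hcast : (A.card : ℝ) ≤ ((N - k : ℕ) : ℝ) := Nat.cast_le.2 hcon
        nlinarith
      have hcge2 : N - k + 1 ≤ A.card := by omega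
      have hcast2 : ((N - k : ℕ) : ℝ) + 1 ≤ (A.card : ℝ) := by
        exact_mod_cast hcge2
      have hbeq : b = a := by
        apply le_antisymm hba
        nlinarith
      have hcard' : (A.card : ℝ) = ((N - k : ℕ) : ℝ) + 1 := by
        apply mul_right_cancel₀ (ne_of_gt ha)
        rw [heq, hbeq]; ring
      have hcardA : A.card = N - k + 1 := by exact_mod_cast hcard'
      have hfib : ∀ c : ℝ, (Finset.univ.filter (fun m => y m = c)).card
          = (Finset.univ.filter (fun d => vv N k a b d = c)).card := by
        intro c
        by_cases hc : c = a
        · rw [hc]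
          have hvva : ∀ d : Fin N, vv N k a b d = a ↔ (d:ℕ) ≤ N - k := by
            intro d; unfold vv; split_ifs with h1 h2
            · exact iff_of_true rfl h1.2
            · exact iff_of_true hbeq (by omega)
            · exact iff_of_false (fun h' => (ne_of_gt ha) h'.symm) (by omega)
          have h2 : Finset.univ.filter (fun d => vv N k a b d = a)
              = Finset.univ.filter (fun d : Fin N => (d:ℕ) ≤ N - k) := by
            ext d; simp only [Finset.mem_filter, Finset.mem_univ, true_and]; exact hvva d
          rw [← hAdef, h2, card_B N k hN hk1 hk2, hcardA]
        · by_cases hc0 : c = 0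
          · rw [hc0]
            have h1 : Finset.univ.filter (fun m => y m = 0)
                = Finset.univ.filter (fun m => ¬ y m = a) := by
              ext m; simp only [Finset.mem_filter, Finset.mem_univ, true_and]
              constructor
              · intro h' hcon; exact (ne_of_gt ha) (h'.symm.trans hcon).symm
              · exact hz m
            have h2 : Finset.univ.filter (fun d => vv N k a b d = 0)
                = Finset.univ.filter (fun d : Fin N => ¬ ((d:ℕ) ≤ N - k)) := by
              ext d
              simp only [Finset.mem_filter, Finset.mem_univ, true_and]
              unfold vv; split_ifs with hh1 hh2
              · exact iff_of_false (fun h' => (ne_of_gt ha) h') (not_not_intro hh1.2)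
              · exact iff_of_false (fun h' => (ne_of_gt hb) h') (not_not_intro (by omega))
              · exact iff_of_true rfl (by omega)
            have e1 := Finset.card_filter_add_card_filter_not
              (s := (Finset.univ : Finset (Fin N))) (p := fun m => y m = a)
            have e2 := Finset.card_filter_add_card_filter_not
              (s := (Finset.univ : Finset (Fin N))) (p := fun d : Fin N => (d:ℕ) ≤ N - k)
            rw [Finset.card_univ, Fintype.card_fin] at e1 e2
            rw [← hAdef, hcardA] at e1
            rw [card_B N k hN hk1 hk2] at e2
            rw [h1, h2]
            omega
          · have h1 : Finset.univ.filter (fun m => y m = c) = ∅ := by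
              rw [Finset.filter_eq_empty_iff]
              intro m _
              rcases htri m with h | h | h
              · rw [h]; exact fun hh => hc hh.symm
              · exact absurd ⟨m, h⟩ hex
              · rw [h]; exact fun hh => hc0 hh.symm
            have h2 : Finset.univ.filter (fun d => vv N k a b d = c) = ∅ := by
              rw [Finset.filter_eq_empty_iff]
              intro d _
              unfold vv; split_ifs
              · exact fun hh => hc hh.symm
              · rw [hbeq]; exact fun hh => hc hh.symm
              · exact fun hh => hc0 hh.symm
            rw [h1, h2]
      obtain ⟨σ, hσ⟩ := exists_perm_of_fiber_card y (vv N k a b) hfib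
      rw [hσ]
      exact le_of_eq (hsym σ _)

lemma cyclic_entry (N k : ℕ) (hN : 2 ≤ N) (ε : ℝ) (i j : Fin N) :
    cyclicMech N k ε i j
      = vv N k (Real.exp ε / N) (1 - Real.exp ε * ((N - k : ℕ) : ℝ) / N) (i - j) := by
  haveI : NeZero N := ⟨by omega⟩
  have hd : ((i - j : Fin N) : ℕ) = ((i:ℕ) + N - (j:ℕ)) % N := by
    rw [Fin.sub_def]
    have := j.isLt
    simp only []
    congr 1
    omega
  have hij : i = j ↔ ((i:ℕ) + N - (j:ℕ)) % N = 0 := by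
    rw [← hd]
    constructor
    · intro h; subst h; simp
    · intro h
      have h0 : i - j = 0 := Fin.ext (by rw [h]; rfl)
      exact sub_eq_zero.mp h0
  show (if 1 ≤ ((i : ℕ) + N - (j : ℕ)) % N ∧ ((i : ℕ) + N - (j : ℕ)) % N ≤ N - k then
      Real.exp ε / N
    else if i = j then 1 - Real.exp ε * ((N - k : ℕ) : ℝ) / N
    else 0) = _
  unfold vv
  rw [hd]
  by_cases h1 : 1 ≤ ((i:ℕ) + N - (j:ℕ)) % N ∧ ((i:ℕ) + N - (j:ℕ)) % N ≤ N - k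
  · rw [if_pos h1, if_pos h1]
  · rw [if_neg h1, if_neg h1]
    by_cases h2 : i = j
    · rw [if_pos h2, if_pos (hij.mp h2)]
    · rw [if_neg h2, if_neg (fun hh => h2 (hij.mpr hh))]

/-- **Optimal mechanism for uniform priors.** For the uniform
prior, `k ∈ {1,…,N−1}` and `ε_{k−1}(p) ≤ ε < ε_k(p)` (where
`ε_j(p) = −log((N−j)/N)`), the cyclic mechanism is valid, satisfies `ε`-PML,
and maximizes every permutation-symmetric sub-convex utility over `M_N(ε)`. -/
theorem uniform_prior_mech_optimal (N : ℕ) (hN : 2 ≤ N) (p : Fin N → ℝ)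
    (hp : ∀ i, p i = 1 / N)
    (k : ℕ) (hk1 : 1 ≤ k) (hk2 : k ≤ N - 1)
    (ε : ℝ)
    (hεlo : -Real.log (((N - (k - 1) : ℕ) : ℝ) / N) ≤ ε)
    (hεhi : ε < -Real.log (((N - k : ℕ) : ℝ) / N)) :
    IsMechanism (cyclicMech N k ε) ∧
    SatisfiesPML p ε (cyclicMech N k ε) ∧
    ∀ μ : (Fin N → ℝ) → ℝ, Sublinear μ → PermSymmetric μ →
      ∀ Q : Matrix (Fin N) (Fin N) ℝ, IsMechanism Q → SatisfiesPML p ε Q →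
        utility μ Q ≤ utility μ (cyclicMech N k ε) := by
  haveI : NeZero N := ⟨by omega⟩
  have hN0 : (0:ℝ) < N := by positivity
  have hnk1 : 1 ≤ N - k := by omega
  have hnkcast : (1:ℝ) ≤ ((N - k : ℕ) : ℝ) := by exact_mod_cast hnk1
  have hnkN : ((N - k : ℕ) : ℝ) < N := by
    have : N - k < N := by omega
    exact_mod_cast this
  -- numeric bounds from the ε hypotheses
  have hnat : N - (k - 1) = (N - k) + 1 := by omega
  have hexp_lo : (N:ℝ) ≤ Real.exp ε * (((N - k : ℕ) : ℝ) + 1) := by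
    rw [hnat] at hεlo
    have hx : (0:ℝ) < (((N - k) + 1 : ℕ) : ℝ) / N := by positivity
    have h1 : Real.log ((((N - k) + 1 : ℕ) : ℝ) / N)⁻¹ ≤ ε := by
      rw [Real.log_inv]; linarith
    have h2 : ((((N - k) + 1 : ℕ) : ℝ) / N)⁻¹ ≤ Real.exp ε := by
      rw [← Real.exp_log (inv_pos.2 hx)]
      exact Real.exp_le_exp.2 h1
    rw [inv_div] at h2
    have h3 : (N:ℝ) ≤ Real.exp ε * (((N - k) + 1 : ℕ) : ℝ) := by
      rw [div_le_iff₀ (by positivity : (0:ℝ) < (((N - k) + 1 : ℕ) : ℝ))] at h2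
      linarith
    have : ((((N - k) + 1 : ℕ)) : ℝ) = ((N - k : ℕ) : ℝ) + 1 := by push_cast; ring
    rwa [this] at h3
  have hexp_hi : Real.exp ε * ((N - k : ℕ) : ℝ) < N := by
    have hx : (0:ℝ) < ((N - k : ℕ) : ℝ) / N := by positivity
    have h1 : ε < Real.log (((N - k : ℕ) : ℝ) / N)⁻¹ := by
      rw [Real.log_inv]; linarith
    have h2 : Real.exp ε < (((N - k : ℕ) : ℝ) / N)⁻¹ := by
      rw [← Real.exp_log (inv_pos.2 hx)]
      exact Real.exp_lt_exp.2 h1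
    rw [inv_div] at h2
    rw [lt_div_iff₀ (by linarith : (0:ℝ) < ((N - k : ℕ) : ℝ))] at h2
    linarith
  have ha : (0:ℝ) < Real.exp ε / N := by positivity
  have hb : (0:ℝ) < 1 - Real.exp ε * ((N - k : ℕ) : ℝ) / N := by
    rw [sub_pos, div_lt_one hN0]
    exact hexp_hi
  have hba : 1 - Real.exp ε * ((N - k : ℕ) : ℝ) / N ≤ Real.exp ε / N := by
    have hsplit : Real.exp ε * (((N - k : ℕ) : ℝ) + 1) / N
        = Real.exp ε / N + Real.exp ε * ((N - k : ℕ) : ℝ) / N := by ring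
    have h1 : (1:ℝ) ≤ Real.exp ε * (((N - k : ℕ) : ℝ) + 1) / N := by
      rw [le_div_iff₀ hN0]; linarith
    linarith [hsplit ▸ h1]
  have hab : ((N - k : ℕ) : ℝ) * (Real.exp ε / N)
      + (1 - Real.exp ε * ((N - k : ℕ) : ℝ) / N) = 1 := by ring
  -- abbreviations
  have hentry : ∀ i j : Fin N, cyclicMech N k ε i j
      = vv N k (Real.exp ε / N) (1 - Real.exp ε * ((N - k : ℕ) : ℝ) / N) (i - j) :=
    fun i j => cyclic_entry N k hN ε i j
  have hsumv : ∑ d, vv N k (Real.exp ε / N) (1 - Real.exp ε * ((N - k : ℕ) : ℝ) / N) d = 1 := by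
    rw [sum_vv N k hN hk1 hk2]; exact hab
  have hrow : ∀ i, ∑ j, cyclicMech N k ε i j = 1 := by
    intro i
    have h := Fintype.sum_equiv (Equiv.subLeft i)
      (fun j => cyclicMech N k ε i j)
      (vv N k (Real.exp ε / N) (1 - Real.exp ε * ((N - k : ℕ) : ℝ) / N))
      (fun j => by
        show cyclicMech N k ε i j = _
        rw [hentry i j, Equiv.subLeft_apply])
    rw [h, hsumv]
  have hcolsum : ∀ j, ∑ i, cyclicMech N k ε i j = 1 := by
    intro j
    have h := Fintype.sum_equiv (Equiv.subRight j)
      (fun i => cyclicMech N k ε i j)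
      (vv N k (Real.exp ε / N) (1 - Real.exp ε * ((N - k : ℕ) : ℝ) / N))
      (fun i => by
        show cyclicMech N k ε i j = _
        rw [hentry i j, Equiv.subRight_apply])
    rw [h, hsumv]
  have hmech : IsMechanism (cyclicMech N k ε) := by
    constructor
    · intro i j
      rw [hentry i j]
      exact vv_nonneg N k ha.le hb.le _
    · exact hrow
  have houtP : ∀ j, outDist p (cyclicMech N k ε) j = 1 / N := by
    intro j
    unfold outDist
    simp only [hp]
    rw [← Finset.mul_sum, hcolsum j, mul_one]
  have hPML : SatisfiesPML p ε (cyclicMech N k ε) := by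
    intro j _
    unfold pml
    have hsup : (⨆ i, cyclicMech N k ε i j) = Real.exp ε / N := by
      apply le_antisymm
      · apply ciSup_le
        intro i
        rw [hentry i j]
        exact vv_le N k ha.le hba _
      · have hbd : BddAbove (Set.range fun i => cyclicMech N k ε i j) :=
          Set.Finite.bddAbove (Set.finite_range _)
        have h1 : cyclicMech N k ε (j + 1) j = Real.exp ε / N := by
          rw [hentry (j + 1) j]
          have hjj : (j + 1 : Fin N) - j = 1 := by
            rw [add_comm, add_sub_cancel_right]
          rw [hjj]
          have hv1 : ((1 : Fin N) : ℕ) = 1 := by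
            rw [Fin.val_one']
            exact Nat.mod_eq_of_lt (by omega)
          unfold vv
          rw [if_pos (by rw [hv1]; exact ⟨le_refl 1, by omega⟩)]
        rw [← h1]
        exact le_ciSup hbd (j + 1)
    rw [hsup, houtP j]
    have hq : Real.exp ε / (N:ℝ) / (1 / N) = Real.exp ε := by
      field_simp
    rw [hq, Real.log_exp]
  refine ⟨hmech, hPML, ?_⟩
  intro μ hμ hsym Q hQ hQpml
  -- entry bound for Q
  have houtQ : ∀ j, outDist p Q j = 1 / (N:ℝ) * (∑ i, Q i j) := by
    intro j
    unfold outDist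
    simp only [hp]
    rw [← Finset.mul_sum]
  have hQb : ∀ j i, Q i j ≤ Real.exp ε / N * (∑ i', Q i' j) := by
    intro j i
    have hs0 : 0 ≤ ∑ i', Q i' j := Finset.sum_nonneg fun i' _ => hQ.1 i' j
    rcases eq_or_lt_of_le hs0 with hs | hs
    · have hz : Q i j = 0 :=
        (Finset.sum_eq_zero_iff_of_nonneg (fun i' _ => hQ.1 i' j)).1 hs.symm i
          (Finset.mem_univ i)
      rw [hz, ← hs, mul_zero]
    · have houtpos : 0 < outDist p Q j := by
        rw [houtQ j]; positivity
      have hpml := hQpml j houtpos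
      unfold pml at hpml
      have hsup_pos : 0 < ⨆ i', Q i' j := by
        obtain ⟨i1, hi1⟩ : ∃ i1, 0 < Q i1 j := by
          by_contra hcon
          push_neg at hcon
          have hle : ∑ i', Q i' j ≤ 0 := Finset.sum_nonpos fun i' _ => hcon i'
          linarith
        exact lt_of_lt_of_le hi1
          (le_ciSup (f := fun i' => Q i' j) (Set.Finite.bddAbove (Set.finite_range _)) i1)
      have hratio : (⨆ i', Q i' j) / outDist p Q j ≤ Real.exp ε := by
        have h1 : Real.exp (Real.log ((⨆ i', Q i' j) / outDist p Q j)) ≤ Real.exp ε :=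
          Real.exp_le_exp.2 hpml
        rwa [Real.exp_log (div_pos hsup_pos houtpos)] at h1
      have hsup_le : (⨆ i', Q i' j) ≤ Real.exp ε * outDist p Q j := by
        rw [div_le_iff₀ houtpos] at hratio
        linarith
      have hQsup : Q i j ≤ ⨆ i', Q i' j :=
        le_ciSup (f := fun i' => Q i' j) (Set.Finite.bddAbove (Set.finite_range _)) i
      have heq2 : Real.exp ε * outDist p Q j = Real.exp ε / N * (∑ i', Q i' j) := by
        rw [houtQ j]; ring
      linarith [heq2 ▸ hsup_le]
  -- per-column utility bound
  have hμvv0 : 0 ≤ μ (vv N k (Real.exp ε / N)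
      (1 - Real.exp ε * ((N - k : ℕ) : ℝ) / N)) :=
    hμ.1 _ (vv_nonneg N k ha.le hb.le)
  have hμcol : ∀ j, μ (fun i => Q i j)
      ≤ (∑ i, Q i j) * μ (vv N k (Real.exp ε / N)
          (1 - Real.exp ε * ((N - k : ℕ) : ℝ) / N)) := by
    intro j
    have hs0 : 0 ≤ ∑ i, Q i j := Finset.sum_nonneg fun i _ => hQ.1 i j
    rcases eq_or_lt_of_le hs0 with hs | hs
    · have hzero : (fun i => Q i j) = (0:ℝ) • (vv N k (Real.exp ε / N)
          (1 - Real.exp ε * ((N - k : ℕ) : ℝ) / N)) := by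
        funext i
        simp only [Pi.smul_apply, smul_eq_mul, zero_mul]
        exact (Finset.sum_eq_zero_iff_of_nonneg (fun i' _ => hQ.1 i' j)).1 hs.symm i
          (Finset.mem_univ i)
      have hcol0 : μ (fun i => Q i j) = 0 := by
        rw [hzero, hμ.2.1 0 le_rfl _ (vv_nonneg N k ha.le hb.le), zero_mul]
      rw [hcol0, ← hs, zero_mul]
    · set s := ∑ i, Q i j with hsdef
      set y := fun i => s⁻¹ * Q i j with hydef
      have hy0 : ∀ i, 0 ≤ y i := fun i => mul_nonneg (inv_nonneg.2 hs0) (hQ.1 i j)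
      have hya : ∀ i, y i ≤ Real.exp ε / N := by
        intro i
        have h1 : s⁻¹ * Q i j ≤ s⁻¹ * (Real.exp ε / N * s) :=
          mul_le_mul_of_nonneg_left (hQb j i) (inv_nonneg.2 hs0)
        calc y i ≤ s⁻¹ * (Real.exp ε / N * s) := h1
          _ = Real.exp ε / N := by field_simp
      have hys : ∑ i, y i = 1 := by
        rw [hydef, ← Finset.mul_sum, ← hsdef, inv_mul_cancel₀ (ne_of_gt hs)]
      have hyQ : (fun i => Q i j) = s • y := by
        funext i
        simp only [hydef, Pi.smul_apply, smul_eq_mul]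
        rw [← mul_assoc, mul_inv_cancel₀ (ne_of_gt hs), one_mul]
      rw [hyQ, hμ.2.1 s hs0 y hy0]
      exact mul_le_mul_of_nonneg_left
        (key_lemma hN hk1 hk2 ha hb hba hab μ hμ hsym _ y rfl hy0 hya hys) hs0
  -- total
  have htot : ∑ j, (∑ i, Q i j) = (N:ℝ) := by
    rw [Finset.sum_comm]
    have : ∀ i : Fin N, ∑ j, Q i j = 1 := hQ.2
    rw [Finset.sum_congr rfl (fun i _ => this i), Finset.sum_const, Finset.card_univ,
      Fintype.card_fin, nsmul_eq_mul, mul_one]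
  have hUP : utility μ (cyclicMech N k ε)
      = (N:ℝ) * μ (vv N k (Real.exp ε / N)
          (1 - Real.exp ε * ((N - k : ℕ) : ℝ) / N)) := by
    unfold utility
    have hcolμ : ∀ j : Fin N, μ (fun i => cyclicMech N k ε i j)
        = μ (vv N k (Real.exp ε / N) (1 - Real.exp ε * ((N - k : ℕ) : ℝ) / N)) := by
      intro j
      have hcol : (fun i => cyclicMech N k ε i j)
          = (vv N k (Real.exp ε / N) (1 - Real.exp ε * ((N - k : ℕ) : ℝ) / N))
            ∘ (Equiv.subRight j) := by
        funext i
        rw [hentry i j]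
        rfl
      rw [hcol]
      exact hsym (Equiv.subRight j) _
    rw [Finset.sum_congr rfl (fun j _ => hcolμ j), Finset.sum_const, Finset.card_univ,
      Fintype.card_fin, nsmul_eq_mul]
  calc utility μ Q = ∑ j, μ (fun i => Q i j) := rfl
    _ ≤ ∑ j, (∑ i, Q i j) * μ (vv N k (Real.exp ε / N)
          (1 - Real.exp ε * ((N - k : ℕ) : ℝ) / N)) :=
        Finset.sum_le_sum fun j _ => hμcol j
    _ = (∑ j, (∑ i, Q i j)) * μ (vv N k (Real.exp ε / N)
          (1 - Real.exp ε * ((N - k : ℕ) : ℝ) / N)) := by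
        rw [Finset.sum_mul]
    _ = (N:ℝ) * μ (vv N k (Real.exp ε / N)
          (1 - Real.exp ε * ((N - k : ℕ) : ℝ) / N)) := by rw [htot]
    _ = utility μ (cyclicMech N k ε) := hUP.symm
end

section
/- Let N ≥ 2, let p be the uniform prior on {x_1,…,x_N}, let k ∈ {1,…,N−1}, and suppose ε_{k−1}(p) ≤ ε < ε_k(p), where ε_j(p) = −log((N−j)/N). Let P* be the mechanism with P*(i,j) = e^ε/N if (i − j) mod N ∈ {1,…,N−k}, P*(j,j) = 1 − e^ε(N−k)/N, and P*(i,j) = 0 otherwise. Then the mutual information between input and output under P* equals I(X;Y) = log N − H(q), where q ∈ ℝ^{N−k+1} is the probability vector with N−k coordinates equal to e^ε/N and one coordinate equal to 1 − (N−k)e^ε/N, and H(q) = −∑_r q_r log q_r (with 0·log 0 = 0) is the Shannon entropy. -/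
/-!
The cyclic mechanism is circulant, `P i j = c (i - j)`, with first column `c` a probability
vector. Under the uniform prior every output then has probability `1/N` and every row of `P` is a
permutation of `c`, so `I(X;Y) = ∑ₘ c m log (N c m) = log N - H(c)`. Finally `c` has the same
nonzero entries as `q`, so `H(c) = H(q)`.
-/

open scoped BigOperators Classical

/-- Mutual information between input and output:
`I(X;Y) = ∑_{i,j : P i j > 0} p_i P_{ij} log(P_{ij} / P_Y(j))`. -/
noncomputable def mutInf {N : ℕ} (p : Fin N → ℝ) (P : Matrix (Fin N) (Fin N) ℝ) : ℝ :=
  ∑ i, ∑ j, if 0 < P i j then p i * P i j * Real.log (P i j / outDist p P j) else 0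

/-- The probability vector with `N−k` coordinates equal to `e^ε/N` and one
coordinate equal to `1 − (N−k)e^ε/N`. -/
noncomputable def qvec (N k : ℕ) (ε : ℝ) : Fin (N - k + 1) → ℝ := fun r =>
  if (r : ℕ) < N - k then Real.exp ε / N else 1 - ((N - k : ℕ) : ℝ) * Real.exp ε / N

/-- Shannon entropy `H(q) = −∑ q_r log q_r` (with the convention
`0 · log 0 = 0`, realized by `Real.log 0 = 0`). -/
noncomputable def shannonEntropy {n : ℕ} (q : Fin n → ℝ) : ℝ :=
  -∑ r, q r * Real.log (q r)

lemma Fin.val_sub_eq_mod {N : ℕ} [NeZero N] (i j : Fin N) :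
    ((i - j : Fin N) : ℕ) = ((i : ℕ) + N - j) % N := by
  rw [Fin.val_sub]
  congr 1
  omega

lemma Fin.sum_ite_Icc_ite_zero {M : Type*} [AddCommMonoid M] {N L : ℕ} [NeZero N]
    (hL : L < N) (x y : M) :
    (∑ m : Fin N, if 1 ≤ (m : ℕ) ∧ (m : ℕ) ≤ L then x else if m = 0 then y else 0) = L • x + y := by
  have hsplit : ∀ m : Fin N,
      (if 1 ≤ (m : ℕ) ∧ (m : ℕ) ≤ L then x else if m = 0 then y else 0)
        = (if 1 ≤ (m : ℕ) ∧ (m : ℕ) ≤ L then x else 0) + if m = 0 then y else 0 := by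
    intro m
    by_cases hm : m = 0 <;> simp [hm]
  have hcard : (Finset.univ.filter fun m : Fin N => 1 ≤ (m : ℕ) ∧ (m : ℕ) ≤ L).card = L := by
    have hIcc : (Finset.univ.filter fun m : Fin N => 1 ≤ (m : ℕ) ∧ (m : ℕ) ≤ L).map
        Fin.valEmbedding = Finset.Icc 1 L := by
      ext m
      simp only [Finset.mem_map, Finset.mem_filter, Finset.mem_univ, true_and,
        Fin.valEmbedding_apply, Finset.mem_Icc]
      exact ⟨fun ⟨m', hm', hm⟩ => hm ▸ hm', fun hm => ⟨⟨m, by omega⟩, hm, rfl⟩⟩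
    rw [← Finset.card_map, hIcc, Nat.card_Icc, Nat.add_sub_cancel]
  simp only [hsplit, Finset.sum_add_distrib, Finset.sum_ite, Finset.sum_const_zero, add_zero,
    Finset.sum_const, hcard, Finset.filter_eq', Finset.mem_univ, if_true, Finset.card_singleton,
    one_smul]

lemma Real.exp_mul_lt_one_of_lt_neg_log {ε r : ℝ} (hr : 0 < r) (hε : ε < -Real.log r) :
    Real.exp ε * r < 1 := by
  have : Real.exp ε < r⁻¹ := by
    rw [← Real.exp_log (inv_pos.mpr hr), Real.log_inv]
    exact Real.exp_lt_exp.mpr hε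
  calc Real.exp ε * r < r⁻¹ * r := by gcongr
    _ = 1 := inv_mul_cancel₀ hr.ne'

section Circulant

variable {N : ℕ} [NeZero N] {p : Fin N → ℝ} {c : Fin N → ℝ}

lemma outDist_circulant_of_uniform (hp : ∀ i, p i = 1 / N) (j : Fin N) :
    outDist p (Matrix.circulant c) j = (∑ m, c m) / N := by
  simp only [outDist, hp, Matrix.circulant_apply, ← Finset.mul_sum]
  rw [Fintype.sum_equiv (Equiv.subRight j) (fun i => c (i - j)) c fun _ => rfl]
  ring

lemma mutInf_circulant_of_uniform (hp : ∀ i, p i = 1 / N) (hc0 : ∀ m, 0 ≤ c m)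
    (hc1 : ∑ m, c m = 1) :
    mutInf p (Matrix.circulant c) = Real.log N - shannonEntropy c := by
  have hN : (N : ℝ) ≠ 0 := Nat.cast_ne_zero.mpr (NeZero.ne N)
  have hterm : ∀ m, (if 0 < c m then 1 / N * c m * Real.log (c m / (1 / N)) else 0)
      = (c m * Real.log N + c m * Real.log (c m)) / N := by
    intro m
    rcases (hc0 m).eq_or_lt with hm | hm
    · simp [← hm]
    · rw [if_pos hm, div_div_eq_mul_div, div_one, Real.log_mul hm.ne' hN]
      ring
  calc mutInf p (Matrix.circulant c)
      = ∑ i : Fin N, ∑ j, (if 0 < c (i - j)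
          then 1 / N * c (i - j) * Real.log (c (i - j) / (1 / N)) else 0) := by
        simp only [mutInf, Matrix.circulant_apply, outDist_circulant_of_uniform hp, hc1, hp]
    _ = ∑ _i : Fin N, ∑ m, (c m * Real.log N + c m * Real.log (c m)) / N := by
        refine Finset.sum_congr rfl fun i _ => ?_
        rw [← Equiv.sum_comp (Equiv.subLeft i)]
        simp only [Equiv.subLeft_apply, sub_sub_cancel, hterm]
    _ = Real.log N - shannonEntropy c := by
        simp only [Finset.sum_const, Finset.card_univ, Fintype.card_fin, nsmul_eq_mul,
          ← Finset.sum_div, Finset.sum_add_distrib, ← Finset.sum_mul, hc1, shannonEntropy]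
        field_simp
        ring

end Circulant

section Cyclic

variable {N k : ℕ} {ε : ℝ}

noncomputable def cyclicKernel (N k : ℕ) [NeZero N] (ε : ℝ) (m : Fin N) : ℝ :=
  if 1 ≤ (m : ℕ) ∧ (m : ℕ) ≤ N - k then Real.exp ε / N
  else if m = 0 then 1 - Real.exp ε * ((N - k : ℕ) : ℝ) / N else 0

lemma cyclicMech_eq_circulant [NeZero N] :
    cyclicMech N k ε = Matrix.circulant (cyclicKernel N k ε) := by
  ext i j
  simp only [cyclicMech, Matrix.of_apply, Matrix.circulant_apply, cyclicKernel,
    Fin.val_sub_eq_mod, sub_eq_zero]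

lemma cyclicKernel_nonneg [NeZero N] (hdiag : 0 ≤ 1 - Real.exp ε * ((N - k : ℕ) : ℝ) / N)
    (m : Fin N) :
    0 ≤ cyclicKernel N k ε m := by
  unfold cyclicKernel
  split_ifs
  · positivity
  · exact hdiag
  · exact le_rfl

lemma sum_comp_cyclicKernel [NeZero N] (hk : 1 ≤ k) (f : ℝ → ℝ) (hf : f 0 = 0) :
    ∑ m, f (cyclicKernel N k ε m)
      = (N - k : ℕ) * f (Real.exp ε / N) + f (1 - Real.exp ε * ((N - k : ℕ) : ℝ) / N) := by
  simp only [cyclicKernel, apply_ite f, hf]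
  rw [Fin.sum_ite_Icc_ite_zero (Nat.sub_lt (NeZero.pos N) hk), nsmul_eq_mul]

lemma sum_cyclicKernel [NeZero N] (hk : 1 ≤ k) : ∑ m, cyclicKernel N k ε m = 1 := by
  rw [sum_comp_cyclicKernel (f := fun t => t) hk rfl]
  ring

lemma sum_comp_qvec (f : ℝ → ℝ) :
    ∑ r, f (qvec N k ε r)
      = (N - k : ℕ) * f (Real.exp ε / N) + f (1 - ((N - k : ℕ) : ℝ) * Real.exp ε / N) := by
  simp [Fin.sum_univ_castSucc, qvec]

lemma shannonEntropy_cyclicKernel [NeZero N] (hk : 1 ≤ k) :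
    shannonEntropy (cyclicKernel N k ε) = shannonEntropy (qvec N k ε) := by
  simp only [shannonEntropy, sum_comp_qvec (fun t => t * Real.log t),
    sum_comp_cyclicKernel hk (fun t => t * Real.log t) (zero_mul _), mul_comm (Real.exp ε)]

end Cyclic

theorem uniform_prior_mech_mutInf_general (N : ℕ) (hN : 2 ≤ N) (p : Fin N → ℝ)
    (hp : ∀ i, p i = 1 / N)
    (k : ℕ) (hk1 : 1 ≤ k) (hk2 : k ≤ N - 1)
    (ε : ℝ)
    (hεhi : ε < -Real.log (((N - k : ℕ) : ℝ) / N)) :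
    mutInf p (cyclicMech N k ε) = Real.log N - shannonEntropy (qvec N k ε) := by
  have : NeZero N := ⟨by omega⟩
  have hfrac : (0 : ℝ) < ((N - k : ℕ) : ℝ) / N := by
    have : 0 < N - k := by omega
    positivity
  have hdiag : 0 ≤ 1 - Real.exp ε * ((N - k : ℕ) : ℝ) / N := by
    have := Real.exp_mul_lt_one_of_lt_neg_log hfrac hεhi
    rw [mul_div_assoc]
    linarith
  rw [cyclicMech_eq_circulant, mutInf_circulant_of_uniform hp (cyclicKernel_nonneg hdiag)
    (sum_cyclicKernel hk1), shannonEntropy_cyclicKernel hk1]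

/-- **Utility of the uniform-prior mechanism.** For the uniform
prior and `ε_{k−1}(p) ≤ ε < ε_k(p)`, the mutual information of the cyclic
mechanism equals `log N − H(q)`. -/
theorem uniform_prior_mech_mutInf (N : ℕ) (hN : 2 ≤ N) (p : Fin N → ℝ)
    (hp : ∀ i, p i = 1 / N)
    (k : ℕ) (hk1 : 1 ≤ k) (hk2 : k ≤ N - 1)
    (ε : ℝ)
    (hεlo : -Real.log (((N - (k - 1) : ℕ) : ℝ) / N) ≤ ε)
    (hεhi : ε < -Real.log (((N - k : ℕ) : ℝ) / N)) :
    mutInf p (cyclicMech N k ε) = Real.log N - shannonEntropy (qvec N k ε) :=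
  uniform_prior_mech_mutInf_general N hN p hp k hk1 hk2 ε hεhi
end

section
/- Let p be a full-support prior on {x_1,…,x_N}, let P* be an N×M privacy mechanism satisfying ε-PML with respect to p (ε ≥ 0), let γ ∈ ℝ, and let φ : {1,…,M} → ℝ satisfy ∑_{j=1}^M P*(i,j)·φ(j) = 0 for every i ∈ {1,…,N} and 1 + γφ(j) ≥ 0 for every j. Define the perturbed matrix P^γ by P^γ(i,j) = P*(i,j)·(1 + γφ(j)). Then: (i) P^γ is a valid privacy mechanism (nonnegative with unit row sums); (ii) P^γ satisfies ε-PML with respect to p; and (iii) for every sublinear μ : [0,∞)^N → [0,∞), the sub-convex utility satisfies U(P^γ) = U(P*) + γ·∑_{j=1}^M φ(j)·μ(P*_j), where P*_j is the j-th column of P*. -/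
open scoped BigOperators Classical

/-- **Perturbation method.** Perturbing a valid `ε`-PML
mechanism `P*` by `P^γ(i,j) = P*(i,j)(1 + γφ(j))`, where
`∑ j, P*(i,j)φ(j) = 0` for all `i` and `1 + γφ(j) ≥ 0` for all `j`, yields a
valid `ε`-PML mechanism whose sub-convex utility satisfies
`U(P^γ) = U(P*) + γ ∑ j, φ(j) μ(P*_j)`. -/
theorem perturbation (N M : ℕ) (p : Fin N → ℝ)
    (hp : ∀ i, 0 < p i) (hpsum : ∑ i, p i = 1)
    (ε : ℝ) (hε : 0 ≤ ε)
    (Pstar : Matrix (Fin N) (Fin M) ℝ)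
    (hmech : IsMechanism Pstar) (hpml : SatisfiesPML p ε Pstar)
    (γ : ℝ) (φ : Fin M → ℝ)
    (hφ1 : ∀ i, ∑ j, Pstar i j * φ j = 0)
    (hφ2 : ∀ j, 0 ≤ 1 + γ * φ j) :
    IsMechanism (Matrix.of fun i j => Pstar i j * (1 + γ * φ j)) ∧
    SatisfiesPML p ε (Matrix.of fun i j => Pstar i j * (1 + γ * φ j)) ∧
    ∀ μ : (Fin N → ℝ) → ℝ, Sublinear μ →
      utility μ (Matrix.of fun i j => Pstar i j * (1 + γ * φ j))
        = utility μ Pstar + γ * ∑ j, φ j * μ (fun i => Pstar i j) := by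
  obtain ⟨hnn, hrow⟩ := hmech
  have hout : ∀ j, outDist p (Matrix.of fun i j => Pstar i j * (1 + γ * φ j)) j
      = outDist p Pstar j * (1 + γ * φ j) := by
    intro j
    simp only [outDist, Matrix.of_apply, Finset.sum_mul]
    exact Finset.sum_congr rfl fun i _ => by ring
  refine ⟨⟨fun i j => mul_nonneg (hnn i j) (hφ2 j), fun i => ?_⟩, ?_, ?_⟩
  · have h1 : ∑ j, Pstar i j * (1 + γ * φ j)
        = ∑ j, Pstar i j + γ * ∑ j, Pstar i j * φ j := by
      rw [Finset.mul_sum, ← Finset.sum_add_distrib]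
      exact Finset.sum_congr rfl fun j _ => by ring
    simp only [Matrix.of_apply]
    rw [h1, hrow i, hφ1 i, mul_zero, add_zero]
  · intro j hj
    rw [hout j] at hj
    have hc : 0 < 1 + γ * φ j := by
      rcases (hφ2 j).lt_or_eq with h | h
      · exact h
      · exfalso; rw [← h, mul_zero] at hj; exact lt_irrefl 0 hj
    have ho : 0 < outDist p Pstar j := by
      by_contra h
      push_neg at h
      exact absurd hj (not_lt.2 (mul_nonpos_of_nonpos_of_nonneg h hc.le))
    have hsup : (⨆ i, (Matrix.of fun i j => Pstar i j * (1 + γ * φ j)) i j)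
        = (⨆ i, Pstar i j) * (1 + γ * φ j) := by
      rw [Real.iSup_mul_of_nonneg hc.le]
      simp [Matrix.of_apply]
    have : pml p (Matrix.of fun i j => Pstar i j * (1 + γ * φ j)) j = pml p Pstar j := by
      unfold pml
      rw [hsup, hout j, mul_div_mul_right _ _ hc.ne']
    rw [this]
    exact hpml j ho
  · intro μ hμ
    obtain ⟨hnn', hhom, _⟩ := hμ
    have hcol : ∀ j, μ (fun i => (Matrix.of fun i j => Pstar i j * (1 + γ * φ j)) i j)
        = (1 + γ * φ j) * μ (fun i => Pstar i j) := by
      intro j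
      have := hhom (1 + γ * φ j) (hφ2 j) (fun i => Pstar i j) (fun i => hnn i j)
      rw [← this]
      congr 1
      funext i
      simp [Matrix.of_apply, mul_comm]
    simp only [utility]
    calc (∑ j, μ fun i => (Matrix.of fun i j => Pstar i j * (1 + γ * φ j)) i j)
        = ∑ j, ((μ fun i => Pstar i j) + γ * (φ j * μ (fun i => Pstar i j))) := by
          refine Finset.sum_congr rfl fun j _ => ?_
          rw [hcol j]; ring
      _ = (∑ j, μ fun i => Pstar i j) + γ * ∑ j, φ j * μ (fun i => Pstar i j) := by
          rw [Finset.sum_add_distrib, ← Finset.mul_sum]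
end

section
/- Let p be a full-support prior on {x_1,…,x_N}, let ε ≥ 0, and let μ : [0,∞)^N → [0,∞) be sublinear. Then the supremum of the sub-convex utility U over M_N(ε) equals the supremum, over all pairs (ρ, Λ) where ρ ∈ [0,∞)^N and Λ ∈ ℝ^{N×N} satisfy 0 ≤ Λ(i,j) ≤ e^ε for all i,j, ∑_{j=1}^N ρ_j·Λ(i,j) = 1 for all i, and ∑_{i=1}^N p_i·Λ(i,j) = 1 for all j, of the objective ∑_{j=1}^N ρ_j·μ(Λ_j), where Λ_j denotes the j-th column of Λ. -/
open scoped BigOperators Classical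

/-- **Reformulation via lifts.** The supremum of the sub-convex
utility over `M_N(ε)` equals the supremum, over pairs `(ρ, Λ)` with
`0 ≤ Λ(i,j) ≤ e^ε`, `∑_j ρ_j Λ(i,j) = 1` for all `i`, and
`∑_i p_i Λ(i,j) = 1` for all `j`, of `∑_j ρ_j μ(Λ_j)`. -/
theorem utility_sup_lift_reformulation (N : ℕ) (hN : 1 ≤ N) (p : Fin N → ℝ)
    (hp : ∀ i, 0 < p i) (hpsum : ∑ i, p i = 1)
    (ε : ℝ) (hε : 0 ≤ ε)
    (μ : (Fin N → ℝ) → ℝ) (hμ : Sublinear μ) :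
    sSup {u : ℝ | ∃ P : Matrix (Fin N) (Fin N) ℝ,
        IsMechanism P ∧ SatisfiesPML p ε P ∧ u = utility μ P}
      = sSup {u : ℝ | ∃ (ρ : Fin N → ℝ) (Λ : Matrix (Fin N) (Fin N) ℝ),
          (∀ j, 0 ≤ ρ j) ∧
          (∀ i j, 0 ≤ Λ i j ∧ Λ i j ≤ Real.exp ε) ∧
          (∀ i, ∑ j, ρ j * Λ i j = 1) ∧
          (∀ j, ∑ i, p i * Λ i j = 1) ∧
          u = ∑ j, ρ j * μ (fun i => Λ i j)} := by
  haveI : Nonempty (Fin N) := ⟨⟨0, hN⟩⟩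
  have hμ0 : μ 0 = 0 := by
    have := hμ.2.1 0 le_rfl 0 (fun i => le_rfl)
    simpa using this
  congr 1
  ext u
  constructor
  · rintro ⟨P, ⟨hP0, hProw⟩, hPML, rfl⟩
    have hout0 : ∀ j, 0 ≤ outDist p P j := fun j =>
      Finset.sum_nonneg fun i _ => mul_nonneg (hp i).le (hP0 i j)
    have hzero : ∀ j, ¬ 0 < outDist p P j → ∀ i, P i j = 0 := by
      intro j hj i
      have hj' : outDist p P j = 0 := le_antisymm (not_lt.mp hj) (hout0 j)
      have := (Finset.sum_eq_zero_iff_of_nonneg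
        (fun i _ => mul_nonneg (hp i).le (hP0 i j))).mp hj' i (Finset.mem_univ i)
      have := mul_eq_zero.mp this
      rcases this with h | h
      · exact absurd h (hp i).ne'
      · exact h
    have hbound : ∀ j, 0 < outDist p P j → ∀ i,
        P i j ≤ Real.exp ε * outDist p P j := by
      intro j hj i
      have hle : ∀ k, P k j ≤ ⨆ k, P k j := fun k =>
        le_ciSup (Set.Finite.bddAbove (Set.finite_range fun k => P k j)) k
      have houtS : outDist p P j ≤ ⨆ k, P k j := by
        calc outDist p P j = ∑ i, p i * P i j := rfl
          _ ≤ ∑ i, p i * ⨆ k, P k j := Finset.sum_le_sum fun i _ =>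
              mul_le_mul_of_nonneg_left (hle i) (hp i).le
          _ = ⨆ k, P k j := by rw [← Finset.sum_mul, hpsum, one_mul]
      have hSpos : 0 < ⨆ k, P k j := lt_of_lt_of_le hj houtS
      have hdiv : 0 < (⨆ k, P k j) / outDist p P j := div_pos hSpos hj
      have hlog := hPML j hj
      unfold pml at hlog
      have h2 := (Real.log_le_iff_le_exp hdiv).mp hlog
      rw [div_le_iff₀ hj] at h2
      exact le_trans (hle i) h2
    refine ⟨fun j => outDist p P j,
      fun i j => if 0 < outDist p P j then P i j / outDist p P j else 1,
      hout0, ?_, ?_, ?_, ?_⟩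
    · intro i j
      by_cases hj : 0 < outDist p P j
      · simp only [if_pos hj]
        constructor
        · exact div_nonneg (hP0 i j) (hout0 j)
        · rw [div_le_iff₀ hj]
          exact hbound j hj i
      · simp only [if_neg hj]
        exact ⟨zero_le_one, Real.one_le_exp hε⟩
    · intro i
      have : ∀ j : Fin N, outDist p P j *
          (if 0 < outDist p P j then P i j / outDist p P j else 1) = P i j := by
        intro j
        by_cases hj : 0 < outDist p P j
        · simp only [if_pos hj]
          field_simp
        · simp only [if_neg hj, mul_one]
          have h0 : outDist p P j = 0 := le_antisymm (not_lt.mp hj) (hout0 j)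
          rw [h0, hzero j hj i]
      simp only [this]
      exact hProw i
    · intro j
      by_cases hj : 0 < outDist p P j
      · simp only [if_pos hj]
        have : ∑ i, p i * (P i j / outDist p P j) = (∑ i, p i * P i j) / outDist p P j := by
          rw [Finset.sum_div]
          apply Finset.sum_congr rfl
          intro i _
          ring
        rw [this]
        exact div_self hj.ne'
      · simp only [if_neg hj, mul_one, hpsum]
    · unfold utility
      apply Finset.sum_congr rfl
      intro j _
      by_cases hj : 0 < outDist p P j
      · simp only [if_pos hj]
        have hx : ∀ i, (0:ℝ) ≤ P i j / outDist p P j :=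
          fun i => div_nonneg (hP0 i j) (hout0 j)
        have := hμ.2.1 (outDist p P j) (hout0 j) (fun i => P i j / outDist p P j) hx
        rw [← this]
        congr 1
        funext i
        simp only [Pi.smul_apply, smul_eq_mul]
        field_simp
      · simp only [if_neg hj]
        have h0 : outDist p P j = 0 := le_antisymm (not_lt.mp hj) (hout0 j)
        have : (fun i => P i j) = (0 : Fin N → ℝ) := funext fun i => hzero j hj i
        rw [this, hμ0, h0, zero_mul]
  · rintro ⟨ρ, Λ, hρ, hΛ, hrow, hcol, rfl⟩
    simp only [Set.mem_setOf_eq]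
    have hout : ∀ j, outDist p (fun i j => ρ j * Λ i j) j = ρ j := by
      intro j
      unfold outDist
      calc ∑ i, p i * (ρ j * Λ i j) = ρ j * ∑ i, p i * Λ i j := by
            rw [Finset.mul_sum]; apply Finset.sum_congr rfl; intro i _; ring
        _ = ρ j := by rw [hcol j, mul_one]
    refine ⟨fun i j => ρ j * Λ i j, ?_, ?_, ?_⟩
    · exact ⟨fun i j => mul_nonneg (hρ j) (hΛ i j).1, hrow⟩
    · intro j hj
      rw [hout j] at hj
      unfold pml
      rw [hout j]
      have hSle : (⨆ i, ρ j * Λ i j) ≤ ρ j * Real.exp ε :=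
        ciSup_le fun i => mul_le_mul_of_nonneg_left (hΛ i j).2 hj.le
      have hS0 : 0 ≤ ⨆ i, ρ j * Λ i j :=
        le_trans (mul_nonneg (hρ j) (hΛ ⟨0, hN⟩ j).1)
          (le_ciSup (Set.Finite.bddAbove (Set.finite_range fun i => ρ j * Λ i j))
            (⟨0, hN⟩ : Fin N))
      by_cases hpos : 0 < (⨆ i, ρ j * Λ i j) / ρ j
      · rw [Real.log_le_iff_le_exp hpos, div_le_iff₀ hj]
        calc (⨆ i, ρ j * Λ i j) ≤ ρ j * Real.exp ε := hSle
          _ = Real.exp ε * ρ j := mul_comm _ _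
      · have h0 : (⨆ i, ρ j * Λ i j) / ρ j = 0 :=
          le_antisymm (not_lt.mp hpos) (div_nonneg hS0 hj.le)
        rw [h0, Real.log_zero]
        exact hε
    · unfold utility
      apply Finset.sum_congr rfl
      intro j _
      have := hμ.2.1 (ρ j) (hρ j) (fun i => Λ i j) (fun i => (hΛ i j).1)
      rw [← this]
      rfl
end
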